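/- arXiv:0904.2507 — 5 statements merged into one kernel-verified Lean document; each statement's English description precedes it below -/
import Mathlib

section
/- Let E be a real Banach space, let v_1, …, v_n ∈ E, and let σ be the weak ℓ²-norm of (v_1, …, v_n). Then for all real numbers x_1, …, x_n and x'_1, …, x'_n with |x_j| ≤ 1 and |x'_j| ≤ 1 for all j, setting z = ‖Σ_{j=1}^n x_j v_j‖ and z'_i = ‖Σ_{j≠i} x_j v_j + x'_i v_i‖ for 1 ≤ i ≤ n, one has Σ_{i : z > z'_i} (z − z'_i)² ≤ 4σ². -/
/-!
Choose a norming functional `φ` of norm at most one for `∑ x j • v j`. Since `φ` is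
`1`-Lipschitz, changing the `i`-th coefficient from `x i` to `x' i` lowers the norm by at most
`(x i - x' i) φ (v i)`, so each nonzero summand is at most `4 φ (v i) ^ 2`. Finally
`∑ φ (v j) ^ 2 ≤ σ ^ 2`: testing the definition of `σ` on the coefficients `φ (v j)` gives
`∑ φ (v j) ^ 2 = φ (∑ φ (v j) • v j) ≤ σ √(∑ φ (v j) ^ 2)`.
-/

open Finset

section WeakL2Norm

variable {ι E : Type*} [Fintype ι] [NormedAddCommGroup E] [NormedSpace ℝ E]

theorem apply_le_norm_of_norm_le_one {φ : StrongDual ℝ E} (hφ : ‖φ‖ ≤ 1) (y : E) : φ y ≤ ‖y‖ :=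
  (le_abs_self _).trans (by simpa using φ.le_of_opNorm_le hφ y)

noncomputable def weakL2Norm (v : ι → E) : ℝ :=
  sSup {r : ℝ | ∃ a : ι → ℝ, (∑ j, |a j| ^ 2) ≤ 1 ∧ r = ‖∑ j, a j • v j‖}

theorem bddAbove_weakL2Norm_set (v : ι → E) :
    BddAbove {r : ℝ | ∃ a : ι → ℝ, (∑ j, |a j| ^ 2) ≤ 1 ∧ r = ‖∑ j, a j • v j‖} := by
  refine ⟨∑ j, ‖v j‖, ?_⟩
  rintro r ⟨a, ha, rfl⟩
  have hcoeff (j : ι) : |a j| ≤ 1 := by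
    have : |a j| ^ 2 ≤ 1 :=
      (single_le_sum (f := fun k => |a k| ^ 2) (fun _ _ => by positivity) (mem_univ j)).trans ha
    nlinarith [abs_nonneg (a j)]
  calc ‖∑ j, a j • v j‖ ≤ ∑ j, ‖a j • v j‖ := norm_sum_le _ _
    _ ≤ ∑ j, ‖v j‖ := sum_le_sum fun j _ => by
        rw [norm_smul, Real.norm_eq_abs]
        exact mul_le_of_le_one_left (norm_nonneg _) (hcoeff j)

theorem norm_sum_smul_le_weakL2Norm (v : ι → E) {a : ι → ℝ} (ha : ∑ j, |a j| ^ 2 ≤ 1) :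
    ‖∑ j, a j • v j‖ ≤ weakL2Norm v :=
  le_csSup (bddAbove_weakL2Norm_set v) ⟨a, ha, rfl⟩

theorem weakL2Norm_nonneg (v : ι → E) : 0 ≤ weakL2Norm v :=
  (norm_nonneg _).trans (norm_sum_smul_le_weakL2Norm v (a := 0) (by simp))

theorem norm_sum_smul_le_weakL2Norm_mul_sqrt (v : ι → E) (b : ι → ℝ) :
    ‖∑ j, b j • v j‖ ≤ weakL2Norm v * √(∑ j, b j ^ 2) := by
  set T := √(∑ j, b j ^ 2)
  have hT2 : T ^ 2 = ∑ j, b j ^ 2 := Real.sq_sqrt (sum_nonneg fun j _ => sq_nonneg _)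
  have hT0 : 0 ≤ T := Real.sqrt_nonneg _
  rcases hT0.eq_or_lt with hT | hT
  · have hb : b = 0 := by
      have hsum : ∑ j, b j ^ 2 = 0 := by rw [← hT2, ← hT, zero_pow two_ne_zero]
      simpa [Fintype.sum_eq_zero_iff_of_nonneg, Pi.le_def, sq_nonneg, funext_iff] using hsum
    simp [hb, mul_nonneg (weakL2Norm_nonneg v) hT0]
  · have hunit : ∑ j, |T⁻¹ * b j| ^ 2 ≤ 1 := by
      simp only [sq_abs, mul_pow, ← mul_sum, ← hT2, inv_pow]
      rw [inv_mul_cancel₀ (pow_pos hT 2).ne']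
    have := norm_sum_smul_le_weakL2Norm v hunit
    simp only [mul_smul, ← smul_sum, norm_smul, norm_inv, Real.norm_of_nonneg hT.le] at this
    rwa [inv_mul_le_iff₀ hT, mul_comm] at this

theorem sum_sq_apply_le_weakL2Norm_sq (v : ι → E) {φ : StrongDual ℝ E} (hφ : ‖φ‖ ≤ 1) :
    ∑ j, φ (v j) ^ 2 ≤ weakL2Norm v ^ 2 := by
  set s := ∑ j, φ (v j) ^ 2
  have hs : s ≤ weakL2Norm v * √s :=
    calc s = φ (∑ j, φ (v j) • v j) := by simp [map_sum, s, sq]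
      _ ≤ ‖∑ j, φ (v j) • v j‖ := apply_le_norm_of_norm_le_one hφ _
      _ ≤ weakL2Norm v * √s := norm_sum_smul_le_weakL2Norm_mul_sqrt v _
  have hσ := weakL2Norm_nonneg v
  have hs2 : √s ^ 2 = s := Real.sq_sqrt (sum_nonneg fun j _ => sq_nonneg _)
  nlinarith [Real.sqrt_nonneg s, sq_nonneg (weakL2Norm v - √s)]

end WeakL2Norm

section Perturbation

variable {ι E : Type*} [Fintype ι] [DecidableEq ι] [NormedAddCommGroup E] [NormedSpace ℝ E]

theorem sum_smul_sub_sum_update_smul (v : ι → E) (x : ι → ℝ) (i : ι) (y : ℝ) :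
    ∑ j, x j • v j - ∑ j, Function.update x i y j • v j = (x i - y) • v i := by
  rw [← sum_sub_distrib, sum_eq_single i]
  · rw [Function.update_self, sub_smul]
  · intro j _ hj
    rw [Function.update_of_ne hj, sub_self]
  · simp

theorem norm_sum_smul_sub_norm_sum_update_smul_le (v : ι → E) (x : ι → ℝ) (i : ι) (y : ℝ)
    {φ : StrongDual ℝ E} (hφ : ‖φ‖ ≤ 1) (hφx : φ (∑ j, x j • v j) = ‖∑ j, x j • v j‖) :
    ‖∑ j, x j • v j‖ - ‖∑ j, Function.update x i y j • v j‖ ≤ (x i - y) * φ (v i) := by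
  have hφle : φ (∑ j, Function.update x i y j • v j) ≤ ‖∑ j, Function.update x i y j • v j‖ :=
    apply_le_norm_of_norm_le_one hφ _
  have hdiff := congrArg φ (sum_smul_sub_sum_update_smul v x i y)
  rw [map_sub, map_smul, smul_eq_mul, hφx] at hdiff
  linarith

end Perturbation

theorem sq_sub_le_four_mul_sq_of_le_mul {z z' t u u' : ℝ} (hu : |u| ≤ 1) (hu' : |u'| ≤ 1)
    (h : z - z' ≤ (u - u') * t) :
    (if z' < z then (z - z') ^ 2 else 0) ≤ 4 * t ^ 2 := by
  split_ifs with hlt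
  · have hdiff : |u - u'| ≤ 2 := (abs_sub _ _).trans (by linarith)
    calc (z - z') ^ 2 ≤ ((u - u') * t) ^ 2 := pow_le_pow_left₀ (by linarith) h 2
      _ = |u - u'| ^ 2 * t ^ 2 := by rw [mul_pow, sq_abs]
      _ ≤ 2 ^ 2 * t ^ 2 := by gcongr
      _ = 4 * t ^ 2 := by norm_num
  · positivity

theorem sum_sq_dev_le_four_weak_l2_sq_general
    {E : Type} [NormedAddCommGroup E] [NormedSpace ℝ E]
    {n : ℕ} (v : Fin n → E) (σ : ℝ)
    (hσ : σ = sSup {r : ℝ | ∃ a : Fin n → ℝ,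
      (∑ j, |a j| ^ 2) ≤ 1 ∧ r = ‖∑ j, a j • v j‖})
    (x x' : Fin n → ℝ) (hx : ∀ j, |x j| ≤ 1) (hx' : ∀ j, |x' j| ≤ 1)
    (z : ℝ) (hz : z = ‖∑ j, x j • v j‖)
    (z' : Fin n → ℝ)
    (hz' : ∀ i, z' i = ‖∑ j, Function.update x i (x' i) j • v j‖) :
    (∑ i, if z' i < z then (z - z' i) ^ 2 else 0) ≤ 4 * σ ^ 2 := by
  obtain ⟨φ, hφ, hφx⟩ := exists_dual_vector'' ℝ (∑ j, x j • v j)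
  have hφx : φ (∑ j, x j • v j) = ‖∑ j, x j • v j‖ := by exact_mod_cast hφx
  calc (∑ i, if z' i < z then (z - z' i) ^ 2 else 0)
      ≤ ∑ i, 4 * φ (v i) ^ 2 := sum_le_sum fun i _ => by
        refine sq_sub_le_four_mul_sq_of_le_mul (hx i) (hx' i) ?_
        rw [hz, hz' i]
        exact norm_sum_smul_sub_norm_sum_update_smul_le v x i (x' i) hφ hφx
    _ = 4 * ∑ i, φ (v i) ^ 2 := (mul_sum _ _ _).symm
    _ ≤ 4 * σ ^ 2 := by
        rw [hσ]
        exact mul_le_mul_of_nonneg_left (sum_sq_apply_le_weakL2Norm_sq v hφ) (by norm_num)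

/-- **Key verification in the proof of the one-sided concentration inequality.**
Let `E` be a real Banach space, `v 1, …, v n ∈ E`, and let `σ` be the weak `ℓ²`-norm of
`(v 1, …, v n)`. For real numbers `x j, x' j` with `|x j| ≤ 1` and `|x' j| ≤ 1`, set
`z = ‖∑ x j • v j‖` and `z' i = ‖∑_{j ≠ i} x j • v j + x' i • v i‖`. Then
`∑_{i : z > z' i} (z - z' i)² ≤ 4 σ²`. -/
theorem sum_sq_dev_le_four_weak_l2_sq
    {E : Type} [NormedAddCommGroup E] [NormedSpace ℝ E] [CompleteSpace E]
    {n : ℕ} (v : Fin n → E) (σ : ℝ)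
    (hσ : σ = sSup {r : ℝ | ∃ a : Fin n → ℝ,
      (∑ j, |a j| ^ 2) ≤ 1 ∧ r = ‖∑ j, a j • v j‖})
    (x x' : Fin n → ℝ) (hx : ∀ j, |x j| ≤ 1) (hx' : ∀ j, |x' j| ≤ 1)
    (z : ℝ) (hz : z = ‖∑ j, x j • v j‖)
    (z' : Fin n → ℝ)
    (hz' : ∀ i, z' i = ‖∑ j, Function.update x i (x' i) j • v j‖) :
    (∑ i, if z' i < z then (z - z' i) ^ 2 else 0) ≤ 4 * σ ^ 2 :=
  sum_sq_dev_le_four_weak_l2_sq_general v σ hσ x x' hx hx' z hz z' hz'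
end

section
/- There is a numerical constant C₀ > 0 such that for every finite subset A ⊆ ℤ with n = |A| ≥ 2, every family of complex numbers (a_j)_{j∈A} with Σ_{j∈A} |a_j|² ≤ 1, and every real p ≥ 2, one has ‖Σ_{j∈A} a_j e_j‖_{L^p(𝕋)} ≤ C₀ √p · √(n / log n). -/
/-!
Interpolate between `L²` and `L^∞`. By orthogonality of the characters, `‖F‖₂ = ‖a‖₂` for
`F = ∑_{j ∈ A} a_j e_j`, while Cauchy–Schwarz gives `‖F‖_∞ ≤ √n ‖a‖₂`; hence
`‖F‖_p^p ≤ ‖F‖_∞^{p-2} ‖F‖₂² ≤ n^{p/2-1} ‖a‖₂^p`. Finally `n^{-1/p} ≤ √(p / log n)` because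
`log n ≤ (p/2) n^{2/p}`.
-/

open Real MeasureTheory intervalIntegral

theorem Real.rpow_le_rpow_sub_two_mul_sq {x M p : ℝ} (hx : 0 ≤ x) (hxM : x ≤ M) (hp : 2 ≤ p) :
    x ^ p ≤ M ^ (p - 2) * x ^ 2 := by
  calc x ^ p = x ^ (p - 2) * x ^ (2 : ℝ) := by
        rw [← Real.rpow_add' hx (by linarith), sub_add_cancel]
    _ ≤ M ^ (p - 2) * x ^ 2 := by
        rw [Real.rpow_two]
        gcongr

theorem Real.rpow_one_sub_two_div_le_div_log {n p : ℝ} (hn : 1 < n) (hp : 0 < p) :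
    n ^ (1 - 2 / p) ≤ p / 2 * (n / log n) := by
  have hn0 : 0 < n := by linarith
  have hlog : 0 < log n := Real.log_pos hn
  have hlog_le : log n ≤ n ^ (2 / p) / (2 / p) := Real.log_le_rpow_div hn0.le (by positivity)
  rw [mul_div_assoc', le_div_iff₀ hlog]
  calc n ^ (1 - 2 / p) * log n ≤ n ^ (1 - 2 / p) * (n ^ (2 / p) / (2 / p)) := by gcongr
    _ = p / 2 * n := by
        rw [mul_div_assoc', ← Real.rpow_add hn0, sub_add_cancel, Real.rpow_one]
        field_simp

theorem Real.rpow_half_sub_inv_le_sqrt_mul_sqrt_div_log {n p : ℝ} (hn : 1 < n) (hp : 0 < p) :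
    n ^ (1 / 2 - 1 / p) ≤ √p * √(n / log n) := by
  calc n ^ (1 / 2 - 1 / p) = √(n ^ (1 - 2 / p)) := by
        rw [Real.sqrt_eq_rpow, ← Real.rpow_mul (by linarith)]
        ring_nf
    _ ≤ √(p * (n / log n)) := by
        gcongr
        refine (Real.rpow_one_sub_two_div_le_div_log hn hp).trans ?_
        have : 0 ≤ n / log n := div_nonneg (by linarith) (Real.log_nonneg hn.le)
        nlinarith
    _ = √p * √(n / log n) := Real.sqrt_mul hp.le _

theorem intervalIntegral.integral_norm_rpow_le_of_norm_le {E : Type*} [NormedAddCommGroup E]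
    {f : ℝ → E} {a b M p : ℝ} (hf : Continuous f) (hab : a ≤ b) (hM : ∀ t, ‖f t‖ ≤ M)
    (hp : 2 ≤ p) :
    ∫ t in a..b, ‖f t‖ ^ p ≤ M ^ (p - 2) * ∫ t in a..b, ‖f t‖ ^ 2 := by
  rw [← integral_const_mul]
  refine integral_mono_on hab ?_ ?_ fun t _ =>
    Real.rpow_le_rpow_sub_two_mul_sq (norm_nonneg _) (hM t) hp
  · exact (hf.norm.rpow_const fun _ => Or.inr (by linarith)).intervalIntegrable _ _
  · exact (continuous_const.mul (hf.norm.pow 2)).intervalIntegrable _ _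

theorem integral_exp_int_mul_I (m : ℤ) :
    ∫ t in (0 : ℝ)..(2 * π), Complex.exp (m * t * Complex.I) =
      if m = 0 then ((2 * π : ℝ) : ℂ) else 0 := by
  split_ifs with hm
  · simp [hm]
  · have hc : (m : ℂ) * Complex.I ≠ 0 := by simp [Complex.I_ne_zero, hm]
    have hperiod : Complex.exp ((m : ℂ) * Complex.I * (2 * π)) = 1 := by
      rw [show (m : ℂ) * Complex.I * (2 * π) = m * (2 * π * Complex.I) by ring]
      exact Complex.exp_int_mul_two_pi_mul_I m
    simp_rw [mul_right_comm _ _ Complex.I]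
    rw [integral_exp_mul_complex hc]
    simp [hperiod]

theorem integral_exp_int_mul_I_mul_conj (j k : ℤ) :
    ∫ t in (0 : ℝ)..(2 * π),
        Complex.exp (j * t * Complex.I) * starRingEnd ℂ (Complex.exp (k * t * Complex.I)) =
      if j = k then ((2 * π : ℝ) : ℂ) else 0 := by
  have hexp (t : ℝ) :
      Complex.exp (j * t * Complex.I) * starRingEnd ℂ (Complex.exp (k * t * Complex.I)) =
        Complex.exp ((j - k : ℤ) * t * Complex.I) := by
    rw [← Complex.exp_conj, ← Complex.exp_add]
    simp only [map_mul, Complex.conj_I, Complex.conj_ofReal, map_intCast]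
    push_cast
    ring_nf
  simp_rw [hexp, integral_exp_int_mul_I, sub_eq_zero]

noncomputable def trigPoly (A : Finset ℤ) (a : ℤ → ℂ) (t : ℝ) : ℂ :=
  ∑ j ∈ A, a j * Complex.exp (j * t * Complex.I)

theorem integral_norm_trigPoly_sq (A : Finset ℤ) (a : ℤ → ℂ) :
    ∫ t in (0 : ℝ)..(2 * π), ‖trigPoly A a t‖ ^ 2 = 2 * π * ∑ j ∈ A, ‖a j‖ ^ 2 := by
  have hint (j k : ℤ) : IntervalIntegrable (fun t : ℝ => a j * starRingEnd ℂ (a k) *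
      (Complex.exp (j * t * Complex.I) * starRingEnd ℂ (Complex.exp (k * t * Complex.I))))
      volume 0 (2 * π) := by
    apply Continuous.intervalIntegrable; fun_prop
  apply Complex.ofReal_injective
  calc ((∫ t in (0 : ℝ)..(2 * π), ‖trigPoly A a t‖ ^ 2 : ℝ) : ℂ)
      = ∫ t in (0 : ℝ)..(2 * π), trigPoly A a t * starRingEnd ℂ (trigPoly A a t) := by
        simp only [← integral_ofReal, Complex.ofReal_pow, Complex.mul_conj']
    _ = ∑ j ∈ A, ∑ k ∈ A, a j * starRingEnd ℂ (a k) * ∫ t in (0 : ℝ)..(2 * π),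
          Complex.exp (j * t * Complex.I) * starRingEnd ℂ (Complex.exp (k * t * Complex.I)) := by
        have hexpand (t : ℝ) : trigPoly A a t * starRingEnd ℂ (trigPoly A a t) =
            ∑ j ∈ A, ∑ k ∈ A, a j * starRingEnd ℂ (a k) *
              (Complex.exp (j * t * Complex.I) *
                starRingEnd ℂ (Complex.exp (k * t * Complex.I))) := by
          simp only [trigPoly, map_sum, map_mul, Finset.sum_mul_sum]
          exact Finset.sum_congr rfl fun j _ => Finset.sum_congr rfl fun k _ => by ring
        simp_rw [hexpand]
        rw [intervalIntegral.integral_finsetSum fun j _ => ?_]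
        · refine Finset.sum_congr rfl fun j _ => ?_
          rw [intervalIntegral.integral_finsetSum fun k _ => hint j k]
          exact Finset.sum_congr rfl fun k _ => integral_const_mul _ _
        · apply Continuous.intervalIntegrable; fun_prop
    _ = ((2 * π * ∑ j ∈ A, ‖a j‖ ^ 2 : ℝ) : ℂ) := by
        simp only [integral_exp_int_mul_I_mul_conj, mul_ite, mul_zero, Finset.sum_ite_eq]
        push_cast
        rw [Finset.mul_sum]
        refine Finset.sum_congr rfl fun j hj => ?_
        rw [if_pos hj, Complex.mul_conj']
        ring

theorem norm_trigPoly_sq_le (A : Finset ℤ) (a : ℤ → ℂ) (t : ℝ) :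
    ‖trigPoly A a t‖ ^ 2 ≤ A.card * ∑ j ∈ A, ‖a j‖ ^ 2 := by
  have htriangle : ‖trigPoly A a t‖ ≤ ∑ j ∈ A, ‖a j‖ := by
    refine (norm_sum_le _ _).trans_eq (Finset.sum_congr rfl fun j _ => ?_)
    rw [norm_mul, show (j : ℂ) * t * Complex.I = ((j * t : ℝ) : ℂ) * Complex.I by push_cast; ring,
      Complex.norm_exp_ofReal_mul_I, mul_one]
  calc ‖trigPoly A a t‖ ^ 2 ≤ (∑ j ∈ A, ‖a j‖) ^ 2 := by gcongr
    _ ≤ A.card * ∑ j ∈ A, ‖a j‖ ^ 2 := sq_sum_le_card_mul_sum_sq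

theorem trigPoly_moment_le (A : Finset ℤ) (a : ℤ → ℂ) {p : ℝ} (hp : 2 ≤ p) :
    (1 / (2 * π)) * ∫ t in (0 : ℝ)..(2 * π), ‖trigPoly A a t‖ ^ p ≤
      (A.card : ℝ) ^ (p / 2 - 1) * (∑ j ∈ A, ‖a j‖ ^ 2) ^ (p / 2) := by
  set S := ∑ j ∈ A, ‖a j‖ ^ 2
  have hS : 0 ≤ S := by positivity
  have hbound (t : ℝ) : ‖trigPoly A a t‖ ≤ √(A.card * S) :=
    Real.le_sqrt_of_sq_le (norm_trigPoly_sq_le A a t)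
  have hcont : Continuous (trigPoly A a) := by unfold trigPoly; fun_prop
  have hint := integral_norm_rpow_le_of_norm_le hcont (by positivity : (0 : ℝ) ≤ 2 * π) hbound hp
  rw [integral_norm_trigPoly_sq] at hint
  calc (1 / (2 * π)) * ∫ t in (0 : ℝ)..(2 * π), ‖trigPoly A a t‖ ^ p
      ≤ (1 / (2 * π)) * (√(A.card * S) ^ (p - 2) * (2 * π * S)) := by gcongr
    _ = (A.card : ℝ) ^ (p / 2 - 1) * S ^ (p / 2) := by
        have hSpow : S ^ (p / 2) = S ^ (p / 2 - 1) * S := by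
          rw [← Real.rpow_add_one' hS (by linarith), sub_add_cancel]
        rw [hSpow, Real.sqrt_eq_rpow, ← Real.rpow_mul (by positivity),
          Real.mul_rpow (by positivity) hS, show 1 / 2 * (p - 2) = p / 2 - 1 by ring]
        field_simp

theorem trigPoly_lpNorm_le (A : Finset ℤ) (a : ℤ → ℂ) {p : ℝ} (hp : 2 ≤ p) :
    ((1 / (2 * π)) * ∫ t in (0 : ℝ)..(2 * π), ‖trigPoly A a t‖ ^ p) ^ (1 / p) ≤
      (A.card : ℝ) ^ (1 / 2 - 1 / p) * √(∑ j ∈ A, ‖a j‖ ^ 2) := by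
  have hmoment_nonneg : 0 ≤ (1 / (2 * π)) * ∫ t in (0 : ℝ)..(2 * π), ‖trigPoly A a t‖ ^ p :=
    mul_nonneg (by positivity) (integral_nonneg (by positivity) fun t _ => by positivity)
  calc ((1 / (2 * π)) * ∫ t in (0 : ℝ)..(2 * π), ‖trigPoly A a t‖ ^ p) ^ (1 / p)
      ≤ ((A.card : ℝ) ^ (p / 2 - 1) * (∑ j ∈ A, ‖a j‖ ^ 2) ^ (p / 2)) ^ (1 / p) :=
        Real.rpow_le_rpow hmoment_nonneg (trigPoly_moment_le A a hp) (by positivity)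
    _ = (A.card : ℝ) ^ (1 / 2 - 1 / p) * √(∑ j ∈ A, ‖a j‖ ^ 2) := by
        rw [Real.mul_rpow (by positivity) (by positivity), ← Real.rpow_mul (by positivity),
          ← Real.rpow_mul (by positivity), Real.sqrt_eq_rpow]
        congr 2 <;> field_simp

/-- **`L^p` bound for unimodular trigonometric sums (weak `ℓ²`-norm lemma).**
There is a numerical constant `C₀ > 0` such that for every finite `A ⊆ ℤ` with
`n = |A| ≥ 2`, every family `(a_j)_{j ∈ A}` of complex numbers with `∑ |a_j|² ≤ 1`, and
every real `p ≥ 2`, the `L^p(𝕋)` norm (normalized Haar measure on `𝕋 = ℝ/2πℤ`) of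
`∑_{j ∈ A} a_j e_j` is at most `C₀ √p √(n / log n)`. -/
theorem lp_bound_trig_sum_weak_l2 :
    ∃ C₀ : ℝ, 0 < C₀ ∧
      ∀ (A : Finset ℤ), 2 ≤ A.card →
      ∀ (a : ℤ → ℂ), (∑ j ∈ A, ‖a j‖ ^ 2) ≤ 1 →
      ∀ (p : ℝ), 2 ≤ p →
        ((1 / (2 * π)) * ∫ t in (0:ℝ)..(2 * π),
            ‖∑ j ∈ A, a j * Complex.exp (j * t * Complex.I)‖ ^ p) ^ (1 / p)
          ≤ C₀ * Real.sqrt p * Real.sqrt ((A.card : ℝ) / Real.log (A.card : ℝ)) := by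
  refine ⟨1, one_pos, fun A hA a ha p hp => ?_⟩
  have hcard : (1 : ℝ) < A.card := by exact_mod_cast hA
  calc ((1 / (2 * π)) * ∫ t in (0 : ℝ)..(2 * π), ‖trigPoly A a t‖ ^ p) ^ (1 / p)
      ≤ (A.card : ℝ) ^ (1 / 2 - 1 / p) * √(∑ j ∈ A, ‖a j‖ ^ 2) := trigPoly_lpNorm_le A a hp
    _ ≤ (A.card : ℝ) ^ (1 / 2 - 1 / p) :=
        mul_le_of_le_one_right (by positivity) (Real.sqrt_le_one.mpr ha)
    _ ≤ √p * √((A.card : ℝ) / log A.card) :=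
        Real.rpow_half_sub_inv_le_sqrt_mul_sqrt_div_log hcard (by linarith)
    _ = 1 * √p * √((A.card : ℝ) / log A.card) := by rw [one_mul]
end

section
/- Let α > 1, β > α, and M_n = n^{βn}. Let (ε_k)_{k ≥ 16} be independent {0,1}-valued random variables with E[ε_k] = δ_k = c (log k)^α / (k (log log k)^{α+1}), where c > 0 is small enough that δ_k ≤ 1 for all k ≥ 16, and let Λ(ω) = {k ≥ 16 : ε_k(ω) = 1}. Then there exist constants 0 < c₁ ≤ c₂ (depending only on c, α, β) such that almost surely, for all sufficiently large n: c₁ n^{α+1} ≤ |Λ(ω) ∩ [1, M_n]| ≤ c₂ n^{α+1} and c₁ n^{α} ≤ |Λ(ω) ∩ [M_n, M_{n+1})| ≤ c₂ n^{α}. -/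
/-!
For `k` in the block `[M_n, M_{n+1})` one has `log k ≍ n log n` and `log log k ≍ log n`, so
`δ_k ≍ n^α / (k log n)`, while `∑ 1/k` over the block is `≍ log n`: the expected number of
selected points in the `n`-th block is `≍ n^α`, and summing over the blocks, the expected number
up to `M_n` is `≍ n^{α+1}`. Each count `S` is a sum of independent Bernoulli variables, so its
variance is at most its mean `m`, and Chebyshev gives `P(|S - m| ≥ m/2) ≤ 4/m = O(n^{-α})`. As
`α > 1` this is summable, and Borel–Cantelli yields `m/2 < S < 3m/2` for all large `n`, almost
surely.
-/

open MeasureTheory ProbabilityTheory Real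

/-- The selector means `δ_k = c (log k)^α / (k (log log k)^{α+1})`. -/
noncomputable def selectorMean (c α : ℝ) (k : ℕ) : ℝ :=
  c * Real.log (k : ℝ) ^ α / ((k : ℝ) * Real.log (Real.log (k : ℝ)) ^ (α + 1))

/-- The sequence `M_n = n^{βn}`. -/
noncomputable def Mseq (β : ℝ) (n : ℕ) : ℝ := (n : ℝ) ^ (β * n)

open Filter Finset

lemma Mseq_pos (β : ℝ) (n : ℕ) : 0 < Mseq β n := by
  rcases n.eq_zero_or_pos with rfl | hn
  · simp [Mseq]
  · exact rpow_pos_of_pos (by exact_mod_cast hn) _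

lemma log_Mseq (β : ℝ) (n : ℕ) : log (Mseq β n) = β * n * log n := by
  rcases n.eq_zero_or_pos with rfl | hn
  · simp [Mseq]
  · rw [Mseq, log_rpow (by exact_mod_cast hn)]

lemma Mseq_monotone {β : ℝ} (hβ : 0 ≤ β) : Monotone (Mseq β) := by
  refine monotone_nat_of_le_succ fun n => ?_
  simp only [Mseq, Nat.cast_succ]
  calc (n : ℝ) ^ (β * n) ≤ ((n : ℝ) + 1) ^ (β * n) := by gcongr; linarith
    _ ≤ ((n : ℝ) + 1) ^ (β * (n + 1)) :=
      rpow_le_rpow_of_exponent_le (by linarith [n.cast_nonneg (α := ℝ)]) (by nlinarith)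

lemma Mseq_lt_Mseq_succ {β : ℝ} (hβ : 0 < β) {n : ℕ} (hn : 0 < n) :
    Mseq β n < Mseq β (n + 1) := by
  have hn' : (0 : ℝ) < n := by exact_mod_cast hn
  simp only [Mseq, Nat.cast_succ]
  calc (n : ℝ) ^ (β * n) < ((n : ℝ) + 1) ^ (β * n) := by gcongr; linarith
    _ ≤ ((n : ℝ) + 1) ^ (β * (n + 1)) :=
      rpow_le_rpow_of_exponent_le (by linarith) (by nlinarith)

lemma sixteen_le_Mseq {β : ℝ} (hβ : 1 ≤ β) {n : ℕ} (hn : 4 ≤ n) : 16 ≤ Mseq β n := by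
  have hn' : (4 : ℝ) ≤ n := by exact_mod_cast hn
  calc (16 : ℝ) ≤ (n : ℝ) ^ (2 : ℝ) := by rw [rpow_two]; nlinarith
    _ ≤ Mseq β n := rpow_le_rpow_of_exponent_le (by linarith) (by nlinarith)

lemma one_lt_log_of_three_le {x : ℝ} (hx : 3 ≤ x) : 1 < log x := by
  rw [lt_log_iff_exp_lt (by linarith)]
  linarith [exp_one_lt_d9]

lemma log_add_one_le_two_mul_log {x : ℝ} (hx : 2 ≤ x) : log (x + 1) ≤ 2 * log x := by
  calc log (x + 1) ≤ log (x ^ 2) := log_le_log (by linarith) (by nlinarith)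
    _ = 2 * log x := by rw [log_pow]; norm_num

lemma add_one_mul_log_add_one_sub_mul_log_mem_Icc {x : ℝ} (hx : 0 < x) :
    (x + 1) * log (x + 1) - x * log x ∈ Set.Icc (log (x + 1)) (log (x + 1) + 1) := by
  have hmono : log x ≤ log (x + 1) := log_le_log hx (by linarith)
  have hdiff : x * (log (x + 1) - log x) ≤ 1 := by
    rw [← log_div (by positivity) hx.ne']
    calc x * log ((x + 1) / x) ≤ x * ((x + 1) / x - 1) := by
          gcongr; exact log_le_sub_one_of_pos (by positivity)
      _ = 1 := by field_simp; ring
  constructor <;> nlinarith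

lemma log_sub_log_le_sum_Ico_inv {A B : ℕ} (hA : 0 < A) (hAB : A ≤ B) :
    log B - log A ≤ ∑ k ∈ Ico A B, (k : ℝ)⁻¹ := by
  rw [← Finset.sum_Ico_sub (fun k : ℕ => log k) hAB]
  refine sum_le_sum fun k hk => ?_
  have hk : (0 : ℝ) < k := by exact_mod_cast hA.trans_le (mem_Ico.1 hk).1
  push_cast
  rw [← log_div (by positivity) hk.ne']
  calc log ((k + 1) / k) ≤ (k + 1) / k - 1 := log_le_sub_one_of_pos (by positivity)
    _ = (k : ℝ)⁻¹ := by field_simp; ring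

lemma sum_Ico_inv_le_two_mul_log_sub_log {A B : ℕ} (hA : 0 < A) (hAB : A ≤ B) :
    ∑ k ∈ Ico A B, (k : ℝ)⁻¹ ≤ 2 * (log B - log A) := by
  rw [← Finset.sum_Ico_sub (fun k : ℕ => log k) hAB, mul_sum]
  refine sum_le_sum fun k hk => ?_
  have hk : (1 : ℝ) ≤ k := by exact_mod_cast hA.trans_le (mem_Ico.1 hk).1
  push_cast
  rw [← log_div (by positivity) (by positivity)]
  calc (k : ℝ)⁻¹ ≤ 2 * (1 - (((k : ℝ) + 1) / k)⁻¹) := by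
        rw [inv_div, one_sub_div (by positivity), add_sub_cancel_left, inv_eq_one_div,
          mul_one_div, div_le_div_iff₀ (by positivity) (by positivity)]
        linarith
    _ ≤ 2 * log (((k : ℝ) + 1) / k) := by gcongr; exact one_sub_inv_le_log_of_pos (by positivity)

lemma log_ceil_mem_Icc {x : ℝ} (hx : 1 ≤ x) : log ⌈x⌉₊ ∈ Set.Icc (log x) (log 2 + log x) := by
  refine ⟨log_le_log (by linarith) (Nat.le_ceil x), ?_⟩
  rw [← log_mul two_ne_zero (by positivity)]
  exact log_le_log (by positivity) (Nat.ceil_lt_two_mul (by linarith)).le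

noncomputable def MseqBlock (β : ℝ) (n : ℕ) : Finset ℕ := Ico ⌈Mseq β n⌉₊ ⌈Mseq β (n + 1)⌉₊

lemma mem_MseqBlock {β : ℝ} {n k : ℕ} :
    k ∈ MseqBlock β n ↔ Mseq β n ≤ k ∧ (k : ℝ) < Mseq β (n + 1) := by
  simp [MseqBlock, Nat.ceil_le, Nat.lt_ceil]

lemma sixteen_le_of_mem_MseqBlock {β : ℝ} (hβ : 1 ≤ β) {n k : ℕ} (hn : 4 ≤ n)
    (hk : k ∈ MseqBlock β n) : 16 ≤ k := by
  exact_mod_cast (sixteen_le_Mseq hβ hn).trans (mem_MseqBlock.1 hk).1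

lemma log_mem_Icc_of_mem_MseqBlock {β : ℝ} (hβ : 1 ≤ β) {n k : ℕ} (hn : 4 ≤ n)
    (hk : k ∈ MseqBlock β n) : log k ∈ Set.Icc (β * n * log n) (4 * β * n * log n) := by
  obtain ⟨hlo, hhi⟩ := mem_MseqBlock.1 hk
  have hn' : (4 : ℝ) ≤ n := by exact_mod_cast hn
  have hL : 0 < log n := by linarith [one_lt_log_of_three_le (x := n) (by linarith)]
  refine ⟨log_Mseq β n ▸ log_le_log (Mseq_pos β n) hlo, ?_⟩
  have hsucc := log_add_one_le_two_mul_log (x := n) (by linarith)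
  have hsucc₀ : 0 ≤ log ((n : ℝ) + 1) := log_nonneg (by linarith)
  calc log k ≤ log (Mseq β (n + 1)) := log_le_log (by linarith [sixteen_le_Mseq hβ hn]) hhi.le
    _ = β * (n + 1) * log (n + 1) := by rw [log_Mseq]; push_cast; ring
    _ ≤ β * (2 * n) * (2 * log n) := by gcongr; linarith
    _ = 4 * β * n * log n := by ring

lemma log_log_mem_Icc_of_mem_MseqBlock {β : ℝ} (hβ : 1 ≤ β) {n k : ℕ} (hn : 4 ≤ n)
    (hk : k ∈ MseqBlock β n) : log (log k) ∈ Set.Icc (log n) ((log (4 * β) + 2) * log n) := by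
  obtain ⟨hlo, hhi⟩ := log_mem_Icc_of_mem_MseqBlock hβ hn hk
  have hn' : (4 : ℝ) ≤ n := by exact_mod_cast hn
  have hL : 1 < log n := one_lt_log_of_three_le (by linarith)
  have hβL : (n : ℝ) ≤ β * n * log n := by nlinarith [mul_le_mul hβ hL.le zero_le_one (by linarith)]
  have hlogk : 0 < log k := by linarith
  constructor
  · calc log n ≤ log (β * n * log n) := log_le_log (by positivity) hβL
      _ ≤ log (log k) := log_le_log (by positivity) hlo
  · have hLn : log n ≤ n := log_le_self (by positivity)
    have h4β : 0 ≤ log (4 * β) := log_nonneg (by linarith)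
    calc log (log k) ≤ log (4 * β * n ^ 2) :=
          log_le_log (by positivity) (hhi.trans (by rw [pow_two, ← mul_assoc]; gcongr))
      _ = log (4 * β) + 2 * log n := by
          rw [log_mul (by positivity) (by positivity), log_pow]; push_cast; ring
      _ ≤ (log (4 * β) + 2) * log n := by nlinarith

lemma selectorMean_nonneg {c α : ℝ} (hc : 0 ≤ c) {k : ℕ} (hk : 3 ≤ k) :
    0 ≤ selectorMean c α k := by
  have hlog : 1 < log k := one_lt_log_of_three_le (by exact_mod_cast hk)
  have := log_pos hlog
  unfold selectorMean
  positivity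

lemma div_le_selectorMean {c α x y : ℝ} (hc : 0 ≤ c) (hα : 0 ≤ α) {k : ℕ} (hk : 0 < k)
    (hx : 0 ≤ x) (hxk : x ≤ log k) (hy : 0 < log (log k)) (hyk : log (log k) ≤ y) :
    c * x ^ α / (k * y ^ (α + 1)) ≤ selectorMean c α k := by
  have hk' : (0 : ℝ) < k := by exact_mod_cast hk
  unfold selectorMean
  gcongr

lemma selectorMean_le_div {c α x y : ℝ} (hc : 0 ≤ c) (hα : 0 ≤ α) {k : ℕ} (hk : 0 < k)
    (hx : 0 ≤ log k) (hxk : log k ≤ x) (hy : 0 < y) (hyk : y ≤ log (log k)) :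
    selectorMean c α k ≤ c * x ^ α / (k * y ^ (α + 1)) := by
  have hk' : (0 : ℝ) < k := by exact_mod_cast hk
  have := hx.trans hxk
  unfold selectorMean
  gcongr

lemma selectorMean_mem_Icc_of_mem_MseqBlock {c α β : ℝ} (hc : 0 ≤ c) (hα : 0 ≤ α)
    (hβ : 1 ≤ β) {n k : ℕ} (hn : 4 ≤ n) (hk : k ∈ MseqBlock β n) :
    selectorMean c α k ∈ Set.Icc
      (c * β ^ α / (log (4 * β) + 2) ^ (α + 1) * (n ^ α / log n) * (k : ℝ)⁻¹)
      (c * (4 * β) ^ α * (n ^ α / log n) * (k : ℝ)⁻¹) := by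
  have hn' : (4 : ℝ) ≤ n := by exact_mod_cast hn
  have hL : 1 < log n := one_lt_log_of_three_le (by linarith)
  have hk16 := sixteen_le_of_mem_MseqBlock hβ hn hk
  have hk0 : 0 < k := by omega
  have h4β : 0 ≤ log (4 * β) := log_nonneg (by linarith)
  obtain ⟨hx₁, hx₂⟩ := log_mem_Icc_of_mem_MseqBlock hβ hn hk
  obtain ⟨hy₁, hy₂⟩ := log_log_mem_Icc_of_mem_MseqBlock hβ hn hk
  have hsplit (C : ℝ) (hC : 0 ≤ C) : (C * n * log n) ^ α = C ^ α * n ^ α * log n ^ α := by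
    rw [mul_rpow (by positivity) (by positivity), mul_rpow hC (by positivity)]
  have hLpow : log n ^ (α + 1) = log n ^ α * log n := rpow_add_one (by positivity) α
  have hLpow₀ : 0 < log n ^ α := by positivity
  constructor
  · refine le_of_eq_of_le ?_ (div_le_selectorMean hc hα hk0 (by positivity) hx₁
      (by linarith) hy₂)
    rw [hsplit β (by linarith), mul_rpow (by positivity) (by positivity), hLpow]
    field_simp
  · refine le_of_le_of_eq (selectorMean_le_div hc hα hk0 (by linarith) hx₂ (by linarith) hy₁) ?_
    rw [hsplit (4 * β) (by linarith), hLpow]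
    field_simp

lemma log_ceil_Mseq_succ_sub_log_ceil_Mseq_mem_Icc {β : ℝ} (hβ : 1 ≤ β) {n : ℕ} (hn : 4 ≤ n) :
    log ⌈Mseq β (n + 1)⌉₊ - log ⌈Mseq β n⌉₊ ∈ Set.Icc (log n / 2) ((1 + 3 * β) * log n) := by
  have hn' : (4 : ℝ) ≤ n := by exact_mod_cast hn
  have hL : 1 < log n := one_lt_log_of_three_le (by linarith)
  have hlog4 : 2 * log 2 ≤ log n := by
    rw [← log_rpow two_pos]; exact log_le_log (by positivity) (by norm_num; linarith)
  obtain ⟨hA₁, hA₂⟩ := log_ceil_mem_Icc ((sixteen_le_Mseq hβ hn).trans' (by norm_num))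
  obtain ⟨hB₁, hB₂⟩ := log_ceil_mem_Icc ((sixteen_le_Mseq hβ (n := n + 1) (by omega)).trans'
    (by norm_num))
  rw [log_Mseq] at hA₁ hA₂
  rw [log_Mseq, Nat.cast_succ] at hB₁ hB₂
  obtain ⟨hD₁, hD₂⟩ := add_one_mul_log_add_one_sub_mul_log_mem_Icc (x := n) (by positivity)
  have hsucc₁ : log n ≤ log ((n : ℝ) + 1) := log_le_log (by positivity) (by linarith)
  have hsucc₂ := log_add_one_le_two_mul_log (x := n) (by linarith)
  constructor <;> nlinarith

lemma sum_MseqBlock_inv_mem_Icc {β : ℝ} (hβ : 1 ≤ β) {n : ℕ} (hn : 4 ≤ n) :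
    ∑ k ∈ MseqBlock β n, (k : ℝ)⁻¹ ∈ Set.Icc (log n / 2) (2 * (1 + 3 * β) * log n) := by
  have hA : 0 < ⌈Mseq β n⌉₊ := Nat.ceil_pos.2 (Mseq_pos β n)
  have hAB : ⌈Mseq β n⌉₊ ≤ ⌈Mseq β (n + 1)⌉₊ :=
    Nat.ceil_mono (Mseq_monotone (by linarith) n.le_succ)
  obtain ⟨hlo, hhi⟩ := log_ceil_Mseq_succ_sub_log_ceil_Mseq_mem_Icc hβ hn
  exact ⟨hlo.trans (log_sub_log_le_sum_Ico_inv hA hAB),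
    (sum_Ico_inv_le_two_mul_log_sub_log hA hAB).trans (by linarith)⟩

lemma exists_bounds_sum_MseqBlock_selectorMean {c α β : ℝ} (hc : 0 < c) (hα : 0 ≤ α) (hβ : 1 ≤ β) :
    ∃ a b : ℝ, 0 < a ∧ a ≤ b ∧ ∀ n : ℕ, 4 ≤ n →
      a * n ^ α ≤ ∑ k ∈ MseqBlock β n, selectorMean c α k ∧
        ∑ k ∈ MseqBlock β n, selectorMean c α k ≤ b * n ^ α := by
  set a₀ := c * β ^ α / (log (4 * β) + 2) ^ (α + 1)
  set b₀ := c * (4 * β) ^ α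
  have ha₀ : 0 < a₀ := by
    have := log_nonneg (show 1 ≤ 4 * β by linarith)
    positivity
  suffices hbounds : ∀ n : ℕ, 4 ≤ n →
      a₀ / 2 * n ^ α ≤ ∑ k ∈ MseqBlock β n, selectorMean c α k ∧
        ∑ k ∈ MseqBlock β n, selectorMean c α k ≤ b₀ * (2 * (1 + 3 * β)) * n ^ α by
    obtain ⟨h₁, h₂⟩ := hbounds 4 le_rfl
    exact ⟨_, _, by positivity, le_of_mul_le_mul_right (h₁.trans h₂) (by positivity), hbounds⟩
  intro n hn
  have hn' : (4 : ℝ) ≤ n := by exact_mod_cast hn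
  have hL : 1 < log n := one_lt_log_of_three_le (by linarith)
  have hr : 0 ≤ (n : ℝ) ^ α / log n := by positivity
  obtain ⟨hinv₁, hinv₂⟩ := sum_MseqBlock_inv_mem_Icc hβ hn
  have hpt := fun k (hk : k ∈ MseqBlock β n) =>
    selectorMean_mem_Icc_of_mem_MseqBlock hc.le hα hβ hn hk
  constructor
  · calc a₀ / 2 * n ^ α = a₀ * (n ^ α / log n) * (log n / 2) := by field_simp
      _ ≤ a₀ * (n ^ α / log n) * ∑ k ∈ MseqBlock β n, (k : ℝ)⁻¹ := by gcongr
      _ ≤ ∑ k ∈ MseqBlock β n, selectorMean c α k := by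
        rw [mul_sum]; exact sum_le_sum fun k hk => (hpt k hk).1
  · calc ∑ k ∈ MseqBlock β n, selectorMean c α k
        ≤ b₀ * (n ^ α / log n) * ∑ k ∈ MseqBlock β n, (k : ℝ)⁻¹ := by
          rw [mul_sum]; exact sum_le_sum fun k hk => (hpt k hk).2
      _ ≤ b₀ * (n ^ α / log n) * (2 * (1 + 3 * β) * log n) := by gcongr
      _ = b₀ * (2 * (1 + 3 * β)) * n ^ α := by field_simp

lemma sum_Ico_comp_eq_sum_sum_Ico {M : Type*} [AddCommMonoid M] (f : ℕ → M) {g : ℕ → ℕ}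
    (hg : Monotone g) {a n : ℕ} (h : a ≤ n) :
    ∑ k ∈ Ico (g a) (g n), f k = ∑ j ∈ Ico a n, ∑ k ∈ Ico (g j) (g (j + 1)), f k := by
  induction n, h using Nat.le_induction with
  | base => simp
  | succ n hn ih =>
    rw [← sum_Ico_consecutive _ (hg hn) (hg n.le_succ), ih, sum_Ico_succ_top hn]

lemma sum_Ico_rpow_le {α : ℝ} (hα : 0 ≤ α) {a : ℕ} (ha : 1 ≤ a) (n : ℕ) :
    ∑ j ∈ Ico a (n + 1), (j : ℝ) ^ α ≤ (n : ℝ) ^ (α + 1) := by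
  calc ∑ j ∈ Ico a (n + 1), (j : ℝ) ^ α ≤ #(Ico a (n + 1)) • (n : ℝ) ^ α := by
        refine sum_le_card_nsmul _ _ _ fun j hj => ?_
        gcongr
        exact_mod_cast Nat.lt_succ_iff.1 (mem_Ico.1 hj).2
    _ ≤ n * (n : ℝ) ^ α := by
        rw [nsmul_eq_mul, Nat.card_Ico]
        gcongr
        exact_mod_cast Nat.sub_le_of_le_add (by omega)
    _ = (n : ℝ) ^ (α + 1) := by
        rcases n.eq_zero_or_pos with rfl | hn
        · simp [zero_rpow (by linarith : α + 1 ≠ 0)]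
        · rw [rpow_add_one (by positivity), mul_comm]

lemma div_four_rpow_le_sum_Ico_rpow {α : ℝ} (hα : 0 ≤ α) {a n : ℕ} (ha : 2 * a ≤ n)
    (hn : 2 ≤ n) : ((n : ℝ) / 4) ^ (α + 1) ≤ ∑ j ∈ Ico a n, (j : ℝ) ^ α := by
  have hhalf : (n : ℝ) / 4 ≤ (n / 2 : ℕ) := by
    have : n ≤ 2 * (n / 2) + 1 := by omega
    have : (n : ℝ) ≤ 2 * (n / 2 : ℕ) + 1 := by exact_mod_cast this
    have : (2 : ℝ) ≤ n := by exact_mod_cast hn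
    linarith
  calc ((n : ℝ) / 4) ^ (α + 1) = (n / 4 : ℝ) * ((n : ℝ) / 4) ^ α := by
        rw [rpow_add_one (by positivity), mul_comm]
    _ ≤ #(Ico (n / 2) n) • ((n : ℝ) / 4) ^ α := by
        rw [nsmul_eq_mul, Nat.card_Ico]
        gcongr
        have : n ≤ 2 * (n - n / 2) := by omega
        have : (n : ℝ) ≤ 2 * (n - n / 2 : ℕ) := by exact_mod_cast this
        linarith
    _ ≤ ∑ j ∈ Ico (n / 2) n, (j : ℝ) ^ α := by
        refine card_nsmul_le_sum _ _ _ fun j hj => ?_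
        gcongr
        exact hhalf.trans (by exact_mod_cast (mem_Ico.1 hj).1)
    _ ≤ ∑ j ∈ Ico a n, (j : ℝ) ^ α :=
        sum_le_sum_of_subset_of_nonneg (Ico_subset_Ico (by omega) le_rfl)
          fun _ _ _ => by positivity

lemma sum_Ico_ceil_Mseq_eq_sum_MseqBlock {M : Type*} [AddCommMonoid M] (f : ℕ → M) {β : ℝ}
    (hβ : 0 ≤ β) {a n : ℕ} (h : a ≤ n) :
    ∑ k ∈ Ico ⌈Mseq β a⌉₊ ⌈Mseq β n⌉₊, f k = ∑ j ∈ Ico a n, ∑ k ∈ MseqBlock β j, f k :=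
  sum_Ico_comp_eq_sum_sum_Ico f (Nat.ceil_mono.comp (Mseq_monotone hβ)) h

lemma Ico_ceil_Mseq_subset_Icc_floor_Mseq {β : ℝ} {m a n : ℕ} (hm : m ≤ ⌈Mseq β a⌉₊) :
    Ico ⌈Mseq β a⌉₊ ⌈Mseq β n⌉₊ ⊆ Icc m ⌊Mseq β n⌋₊ := fun k hk => by
  obtain ⟨hk₁, hk₂⟩ := mem_Ico.1 hk
  exact mem_Icc.2 ⟨hm.trans hk₁, Nat.le_floor (Nat.lt_ceil.1 hk₂).le⟩

lemma Icc_floor_Mseq_subset_Ico_ceil_Mseq_succ {β : ℝ} (hβ : 0 < β) {m n : ℕ} (hn : 0 < n) :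
    Icc m ⌊Mseq β n⌋₊ ⊆ Ico m ⌈Mseq β (n + 1)⌉₊ := fun k hk => by
  obtain ⟨hk₁, hk₂⟩ := mem_Icc.1 hk
  refine mem_Ico.2 ⟨hk₁, Nat.lt_ceil.2 ?_⟩
  exact ((Nat.le_floor_iff (Mseq_pos β n).le).1 hk₂).trans_lt (Mseq_lt_Mseq_succ hβ hn)

lemma sixteen_le_ceil_Mseq_four {β : ℝ} (hβ : 1 ≤ β) : 16 ≤ ⌈Mseq β 4⌉₊ := by
  exact_mod_cast (sixteen_le_Mseq hβ le_rfl).trans (Nat.le_ceil _)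

section CumulativeSums

variable {f : ℕ → ℝ} {α β a b : ℝ}

lemma le_sum_Icc_floor_Mseq (hf : ∀ k, 16 ≤ k → 0 ≤ f k) (hα : 0 ≤ α) (hβ : 1 ≤ β) (ha : 0 ≤ a)
    (hblock : ∀ j, 4 ≤ j → a * j ^ α ≤ ∑ k ∈ MseqBlock β j, f k) {n : ℕ} (hn : 16 ≤ n) :
    a * ((n : ℝ) / 4) ^ (α + 1) ≤ ∑ k ∈ Icc 16 ⌊Mseq β n⌋₊, f k :=
  calc a * ((n : ℝ) / 4) ^ (α + 1) ≤ ∑ j ∈ Ico 4 n, a * (j : ℝ) ^ α := by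
        rw [← mul_sum]; gcongr; exact div_four_rpow_le_sum_Ico_rpow hα (by omega) (by omega)
    _ ≤ ∑ j ∈ Ico 4 n, ∑ k ∈ MseqBlock β j, f k :=
        sum_le_sum fun j hj => hblock j (mem_Ico.1 hj).1
    _ = ∑ k ∈ Ico ⌈Mseq β 4⌉₊ ⌈Mseq β n⌉₊, f k :=
        (sum_Ico_ceil_Mseq_eq_sum_MseqBlock _ (by linarith) (by omega)).symm
    _ ≤ ∑ k ∈ Icc 16 ⌊Mseq β n⌋₊, f k :=
        sum_le_sum_of_subset_of_nonneg
          (Ico_ceil_Mseq_subset_Icc_floor_Mseq (sixteen_le_ceil_Mseq_four hβ))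
          fun k hk _ => hf k (mem_Icc.1 hk).1

lemma sum_Icc_floor_Mseq_le (hf : ∀ k, 16 ≤ k → 0 ≤ f k) (hα : 0 ≤ α) (hβ : 1 ≤ β) (hb : 0 ≤ b)
    (hblock : ∀ j, 4 ≤ j → ∑ k ∈ MseqBlock β j, f k ≤ b * j ^ α) {n : ℕ} (hn : 4 ≤ n) :
    ∑ k ∈ Icc 16 ⌊Mseq β n⌋₊, f k ≤ ∑ k ∈ Ico 16 ⌈Mseq β 4⌉₊, f k + b * n ^ (α + 1) :=
  calc ∑ k ∈ Icc 16 ⌊Mseq β n⌋₊, f k ≤ ∑ k ∈ Ico 16 ⌈Mseq β (n + 1)⌉₊, f k :=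
        sum_le_sum_of_subset_of_nonneg
          (Icc_floor_Mseq_subset_Ico_ceil_Mseq_succ (by linarith) (by omega))
          fun k hk _ => hf k (mem_Ico.1 hk).1
    _ = ∑ k ∈ Ico 16 ⌈Mseq β 4⌉₊, f k + ∑ j ∈ Ico 4 (n + 1), ∑ k ∈ MseqBlock β j, f k := by
        rw [← sum_Ico_consecutive _ (sixteen_le_ceil_Mseq_four hβ)
          (Nat.ceil_mono (Mseq_monotone (by linarith) (by omega : 4 ≤ n + 1))),
          sum_Ico_ceil_Mseq_eq_sum_MseqBlock _ (by linarith) (by omega)]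
    _ ≤ ∑ k ∈ Ico 16 ⌈Mseq β 4⌉₊, f k + ∑ j ∈ Ico 4 (n + 1), b * (j : ℝ) ^ α := by
        gcongr with j hj; exact hblock j (mem_Ico.1 hj).1
    _ ≤ ∑ k ∈ Ico 16 ⌈Mseq β 4⌉₊, f k + b * n ^ (α + 1) := by
        rw [← mul_sum]; gcongr; exact sum_Ico_rpow_le hα (by norm_num) n

end CumulativeSums

lemma exists_bounds_sum_Icc_selectorMean {c α β : ℝ} (hc : 0 < c) (hα : 0 ≤ α)
    (hβ : 1 ≤ β) :
    ∃ a b : ℝ, 0 < a ∧ a ≤ b ∧ ∀ᶠ n : ℕ in atTop,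
      a * n ^ (α + 1) ≤ ∑ k ∈ Icc 16 ⌊Mseq β n⌋₊, selectorMean c α k ∧
        ∑ k ∈ Icc 16 ⌊Mseq β n⌋₊, selectorMean c α k ≤ b * n ^ (α + 1) := by
  obtain ⟨a, b, ha, hab, hblock⟩ := exists_bounds_sum_MseqBlock_selectorMean hc hα hβ
  have hf (k : ℕ) (hk : 16 ≤ k) : 0 ≤ selectorMean c α k := selectorMean_nonneg hc.le (by omega)
  set C₀ := ∑ k ∈ Ico 16 ⌈Mseq β 4⌉₊, selectorMean c α k
  have hC₀ : 0 ≤ C₀ := sum_nonneg fun k hk => hf k (mem_Ico.1 hk).1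
  have h4 : (4 : ℝ) ^ (-(α + 1)) ≤ 1 := rpow_le_one_of_one_le_of_nonpos (by norm_num) (by linarith)
  refine ⟨a * 4 ^ (-(α + 1)), C₀ + b, by positivity, by nlinarith, ?_⟩
  filter_upwards [eventually_ge_atTop 16] with n hn
  have hn' : (1 : ℝ) ≤ n := by exact_mod_cast (by omega : 1 ≤ n)
  have hpow : 1 ≤ (n : ℝ) ^ (α + 1) := one_le_rpow hn' (by linarith)
  constructor
  · calc a * 4 ^ (-(α + 1)) * n ^ (α + 1) = a * ((n : ℝ) / 4) ^ (α + 1) := by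
          rw [div_rpow (by positivity) (by norm_num), rpow_neg (by norm_num)]; ring
      _ ≤ _ := le_sum_Icc_floor_Mseq hf hα hβ ha.le (fun j hj => (hblock j hj).1) hn
  · nlinarith [sum_Icc_floor_Mseq_le hf hα hβ (ha.trans_le hab).le (fun j hj => (hblock j hj).2)
      (n := n) (by omega)]

section Concentration

variable {Ω : Type*} [MeasurableSpace Ω] {P : Measure Ω}

lemma ae_eventually_notMem_of_summable [IsFiniteMeasure P] {s : ℕ → Set Ω} {f : ℕ → ℝ}
    (hf : Summable f) (hs : ∀ᶠ n in atTop, P (s n) ≤ ENNReal.ofReal (f n)) :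
    ∀ᵐ ω ∂P, ∀ᶠ n in atTop, ω ∉ s n := by
  refine ae_eventually_notMem ?_
  obtain ⟨N, hN⟩ := eventually_atTop.1 hs
  rw [← ENNReal.summable.sum_add_tsum_nat_add' (k := N)]
  refine ENNReal.add_ne_top.2 ⟨ENNReal.sum_ne_top.2 fun n _ => measure_ne_top P _, ?_⟩
  refine ne_top_of_le_ne_top ?_ (ENNReal.tsum_le_tsum fun n => hN (n + N) (Nat.le_add_left N n))
  exact ENNReal.tsum_coe_ne_top_iff_summable.2 ((summable_nat_add_iff N).2 hf).toNNReal

lemma meas_half_integral_le_abs_sub_integral_le [IsFiniteMeasure P] {Y : Ω → ℝ}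
    (hY : MemLp Y 2 P) (hvar : variance Y P ≤ P[Y]) (hpos : 0 < P[Y]) :
    P {ω | P[Y] / 2 ≤ |Y ω - P[Y]|} ≤ ENNReal.ofReal (4 / P[Y]) := by
  refine (meas_ge_le_variance_div_sq hY (half_pos hpos)).trans (ENNReal.ofReal_le_ofReal ?_)
  calc variance Y P / (P[Y] / 2) ^ 2 ≤ P[Y] / (P[Y] / 2) ^ 2 := by gcongr
    _ = 4 / P[Y] := by field_simp; ring

lemma ae_eventually_abs_sub_integral_lt_half [IsFiniteMeasure P] {Y : ℕ → Ω → ℝ} {a p : ℝ}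
    (hp : 1 < p) (ha : 0 < a)
    (hY : ∀ᶠ n in atTop, MemLp (Y n) 2 P ∧ variance (Y n) P ≤ P[Y n] ∧ a * n ^ p ≤ P[Y n]) :
    ∀ᵐ ω ∂P, ∀ᶠ n in atTop, |Y n ω - P[Y n]| < P[Y n] / 2 := by
  have hbad : ∀ᶠ n in atTop, P {ω | P[Y n] / 2 ≤ |Y n ω - P[Y n]|}
      ≤ ENNReal.ofReal (4 / a * ((n : ℝ) ^ p)⁻¹) := by
    filter_upwards [hY, eventually_gt_atTop 0] with n ⟨hL2, hvar, hlb⟩ hn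
    have hpos : 0 < a * (n : ℝ) ^ p := by positivity
    refine (meas_half_integral_le_abs_sub_integral_le hL2 hvar (hpos.trans_le hlb)).trans
      (ENNReal.ofReal_le_ofReal ?_)
    calc 4 / P[Y n] ≤ 4 / (a * (n : ℝ) ^ p) := by gcongr
      _ = 4 / a * ((n : ℝ) ^ p)⁻¹ := by ring
  filter_upwards [ae_eventually_notMem_of_summable
    ((summable_nat_rpow_inv.2 hp).mul_left (4 / a)) hbad] with ω hω
  simpa using hω

lemma memLp_of_zero_or_one [IsFiniteMeasure P] {X : Ω → ℝ} (hX : Measurable X)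
    (h01 : ∀ ω, X ω = 0 ∨ X ω = 1) : MemLp X 2 P :=
  MemLp.of_bound hX.aestronglyMeasurable 1 (ae_of_all _ fun ω => by
    rcases h01 ω with h | h <;> simp [h])

lemma variance_le_integral_of_zero_or_one [IsProbabilityMeasure P] {X : Ω → ℝ}
    (hX : Measurable X) (h01 : ∀ ω, X ω = 0 ∨ X ω = 1) : variance X P ≤ P[X] := by
  have hsq (ω : Ω) : X ω ^ 2 = X ω := by rcases h01 ω with h | h <;> simp [h]
  simpa [hsq] using variance_le_expectation_sq (μ := P) hX.aestronglyMeasurable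

lemma variance_sum_le_integral_sum [IsProbabilityMeasure P] {ι : Type*} {X : ι → Ω → ℝ}
    {t : Finset ι} (hX : ∀ i ∈ t, Measurable (X i))
    (h01 : ∀ i ∈ t, ∀ ω, X i ω = 0 ∨ X i ω = 1)
    (hindep : (t : Set ι).Pairwise fun i j => IndepFun (X i) (X j) P) :
    variance (∑ i ∈ t, X i) P ≤ P[∑ i ∈ t, X i] := by
  have hL2 i (hi : i ∈ t) := memLp_of_zero_or_one (P := P) (hX i hi) (h01 i hi)
  simp only [IndepFun.variance_sum hL2 hindep, Finset.sum_apply]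
  rw [integral_finsetSum t fun i hi => (hL2 i hi).integrable one_le_two]
  exact sum_le_sum fun i hi => variance_le_integral_of_zero_or_one (hX i hi) (h01 i hi)

end Concentration

lemma card_filter_eq_sum {Ω : Type*} {ε : ℕ → Ω → ℝ} {k₀ : ℕ}
    (hval : ∀ k, k₀ ≤ k → ∀ ω, ε k ω = 0 ∨ ε k ω = 1) (ω : Ω) (s : Finset ℕ) :
    (#(s.filter fun k => k₀ ≤ k ∧ ε k ω = 1) : ℝ) = ∑ k ∈ s.filter (k₀ ≤ ·), ε k ω := by
  rw [← filter_filter, natCast_card_filter]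
  refine sum_congr rfl fun k hk => ?_
  rcases hval k (mem_filter.1 hk).2 ω with h | h <;> simp [h]

section Selectors

variable {Ω : Type*} [MeasurableSpace Ω] {P : Measure Ω} {ε : ℕ → Ω → ℝ} {k₀ : ℕ}

lemma ae_eventually_abs_sum_sub_lt_half [IsProbabilityMeasure P] {δ : ℕ → ℝ}
    (hmeas : ∀ k, Measurable (ε k))
    (hindep : iIndepFun (fun k : {k : ℕ // k₀ ≤ k} => ε k) P)
    (hval : ∀ k, k₀ ≤ k → ∀ ω, ε k ω = 0 ∨ ε k ω = 1)
    (hmean : ∀ k, k₀ ≤ k → ∫ ω, ε k ω ∂P = δ k)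
    {t : ℕ → Finset ℕ} {a p : ℝ} (hp : 1 < p) (ha : 0 < a)
    (ht : ∀ᶠ n in atTop, (∀ k ∈ t n, k₀ ≤ k) ∧ a * n ^ p ≤ ∑ k ∈ t n, δ k) :
    ∀ᵐ ω ∂P, ∀ᶠ n in atTop, |∑ k ∈ t n, ε k ω - ∑ k ∈ t n, δ k| < (∑ k ∈ t n, δ k) / 2 := by
  have hL2 {s : Finset ℕ} (hs : ∀ k ∈ s, k₀ ≤ k) (k : ℕ) (hk : k ∈ s) : MemLp (ε k) 2 P :=
    memLp_of_zero_or_one (hmeas k) (hval k (hs k hk))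
  have hsum_mean {s : Finset ℕ} (hs : ∀ k ∈ s, k₀ ≤ k) :
      P[∑ k ∈ s, ε k] = ∑ k ∈ s, δ k := by
    simp only [Finset.sum_apply]
    rw [integral_finsetSum s fun k hk => (hL2 hs k hk).integrable one_le_two]
    exact sum_congr rfl fun k hk => hmean k (hs k hk)
  have hY : ∀ᶠ n in atTop, MemLp (∑ k ∈ t n, ε k) 2 P ∧
      variance (∑ k ∈ t n, ε k) P ≤ P[∑ k ∈ t n, ε k] ∧ a * n ^ p ≤ P[∑ k ∈ t n, ε k] := by
    filter_upwards [ht] with n ⟨hs, hlb⟩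
    refine ⟨memLp_finsetSum' _ (hL2 hs), variance_sum_le_integral_sum (fun k _ => hmeas k)
      (fun k hk => hval k (hs k hk)) fun i hi j hj hij => ?_, hsum_mean hs ▸ hlb⟩
    exact hindep.indepFun (i := ⟨i, hs i hi⟩) (j := ⟨j, hs j hj⟩) (Subtype.coe_ne_coe.1 hij)
  filter_upwards [ae_eventually_abs_sub_integral_lt_half hp ha hY] with ω hω
  filter_upwards [hω, ht] with n hn ⟨hs, _⟩
  rwa [hsum_mean hs, Finset.sum_apply] at hn

end Selectors

lemma le_and_le_of_abs_sub_lt_half {S m a b c₁ c₂ x : ℝ} (hx : 0 ≤ x) (h : |S - m| < m / 2)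
    (ha : a * x ≤ m) (hb : m ≤ b * x) (hc₁ : c₁ ≤ a / 2) (hc₂ : 3 / 2 * b ≤ c₂) :
    c₁ * x ≤ S ∧ S ≤ c₂ * x := by
  obtain ⟨h₁, h₂⟩ := abs_lt.1 h
  constructor <;> nlinarith [mul_le_mul_of_nonneg_right hc₁ hx, mul_le_mul_of_nonneg_right hc₂ hx]

theorem random_set_block_growth_general
    {Ω : Type} [MeasurableSpace Ω] {P : Measure Ω} [IsProbabilityMeasure P]
    (α β c : ℝ) (hα : 1 < α) (hβ : α < β)
    (hc : 0 < c)
    (ε : ℕ → Ω → ℝ) (hmeas : ∀ k, Measurable (ε k))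
    (hindep : iIndepFun (fun k : {k : ℕ // 16 ≤ k} => ε k) P)
    (hval : ∀ k : ℕ, 16 ≤ k → ∀ ω, ε k ω = 0 ∨ ε k ω = 1)
    (hmean : ∀ k : ℕ, 16 ≤ k → ∫ ω, ε k ω ∂P = selectorMean c α k) :
    ∃ c₁ c₂ : ℝ, 0 < c₁ ∧ c₁ ≤ c₂ ∧
      ∀ᵐ ω ∂P, ∃ n₀ : ℕ, ∀ n : ℕ, n₀ ≤ n →
        (c₁ * (n : ℝ) ^ (α + 1) ≤
            (((Finset.Icc 1 (Nat.floor (Mseq β n))).filter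
              (fun k => 16 ≤ k ∧ ε k ω = 1)).card : ℝ) ∧
          (((Finset.Icc 1 (Nat.floor (Mseq β n))).filter
              (fun k => 16 ≤ k ∧ ε k ω = 1)).card : ℝ) ≤ c₂ * (n : ℝ) ^ (α + 1)) ∧
        (c₁ * (n : ℝ) ^ α ≤
            (((Finset.Ico (Nat.ceil (Mseq β n)) (Nat.ceil (Mseq β (n + 1)))).filter
              (fun k => 16 ≤ k ∧ ε k ω = 1)).card : ℝ) ∧
          (((Finset.Ico (Nat.ceil (Mseq β n)) (Nat.ceil (Mseq β (n + 1)))).filter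
              (fun k => 16 ≤ k ∧ ε k ω = 1)).card : ℝ) ≤ c₂ * (n : ℝ) ^ α) := by
  have hβ₁ : 1 ≤ β := (hα.trans hβ).le
  have hα₀ : 0 ≤ α := by linarith
  obtain ⟨a₁, b₁, ha₁, hab₁, hcum⟩ := exists_bounds_sum_Icc_selectorMean hc hα₀ hβ₁
  obtain ⟨a₂, b₂, ha₂, hab₂, hblock⟩ := exists_bounds_sum_MseqBlock_selectorMean hc hα₀ hβ₁
  have hconc₁ := ae_eventually_abs_sum_sub_lt_half hmeas hindep hval hmean (by linarith) ha₁
    (hcum.mono fun _ h => ⟨fun k hk => (mem_Icc.1 hk).1, h.1⟩)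
  have hconc₂ := ae_eventually_abs_sum_sub_lt_half hmeas hindep hval hmean hα ha₂
    ((eventually_ge_atTop 4).mono fun n hn => ⟨fun k => sixteen_le_of_mem_MseqBlock hβ₁ hn,
      (hblock n hn).1⟩)
  refine ⟨min a₁ a₂ / 2, 3 / 2 * max b₁ b₂, by positivity, ?_, ?_⟩
  · linarith [min_le_left a₁ a₂, le_max_left b₁ b₂]
  filter_upwards [hconc₁, hconc₂] with ω h₁ h₂
  obtain ⟨n₀, hn₀⟩ := eventually_atTop.1 ((h₁.and h₂).and (hcum.and (eventually_ge_atTop 4)))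
  refine ⟨n₀, fun n hn => ?_⟩
  obtain ⟨⟨e₁, e₂⟩, m₁, hn₄⟩ := hn₀ n hn
  have m₂ := hblock n hn₄
  have hIcc : (Icc 1 ⌊Mseq β n⌋₊).filter (16 ≤ ·) = Icc 16 ⌊Mseq β n⌋₊ := by
    ext; simp only [mem_filter, mem_Icc]; omega
  have hIco : (Ico ⌈Mseq β n⌉₊ ⌈Mseq β (n + 1)⌉₊).filter (16 ≤ ·) = MseqBlock β n :=
    filter_true_of_mem fun k => sixteen_le_of_mem_MseqBlock hβ₁ hn₄
  rw [card_filter_eq_sum hval, card_filter_eq_sum hval, hIcc, hIco]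
  exact ⟨le_and_le_of_abs_sub_lt_half (by positivity) e₁ m₁.1 m₁.2
      (by linarith [min_le_left a₁ a₂]) (by linarith [le_max_left b₁ b₂]),
    le_and_le_of_abs_sub_lt_half (by positivity) e₂ m₂.1 m₂.2
      (by linarith [min_le_right a₁ a₂]) (by linarith [le_max_right b₁ b₂])⟩

/-- **Lemma 4.3: growth of the random set.** For `α > 1 < β`, `M_n = n^{βn}` and the
random set `Λ(ω)` of selectors of mean `δ_k = c (log k)^α / (k (log log k)^{α+1})`,
almost surely `|Λ(ω) ∩ [1, M_n]| ≈ n^{α+1}` and `|Λ(ω) ∩ [M_n, M_{n+1})| ≈ n^α` for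
large `n`. -/
theorem random_set_block_growth
    {Ω : Type} [MeasurableSpace Ω] {P : Measure Ω} [IsProbabilityMeasure P]
    (α β c : ℝ) (hα : 1 < α) (hβ : α < β)
    (hc : 0 < c) (hcsmall : ∀ k : ℕ, 16 ≤ k → selectorMean c α k ≤ 1)
    (ε : ℕ → Ω → ℝ) (hmeas : ∀ k, Measurable (ε k))
    (hindep : iIndepFun (fun k : {k : ℕ // 16 ≤ k} => ε k) P)
    (hval : ∀ k : ℕ, 16 ≤ k → ∀ ω, ε k ω = 0 ∨ ε k ω = 1)
    (hmean : ∀ k : ℕ, 16 ≤ k → ∫ ω, ε k ω ∂P = selectorMean c α k) :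
    ∃ c₁ c₂ : ℝ, 0 < c₁ ∧ c₁ ≤ c₂ ∧
      ∀ᵐ ω ∂P, ∃ n₀ : ℕ, ∀ n : ℕ, n₀ ≤ n →
        (c₁ * (n : ℝ) ^ (α + 1) ≤
            (((Finset.Icc 1 (Nat.floor (Mseq β n))).filter
              (fun k => 16 ≤ k ∧ ε k ω = 1)).card : ℝ) ∧
          (((Finset.Icc 1 (Nat.floor (Mseq β n))).filter
              (fun k => 16 ≤ k ∧ ε k ω = 1)).card : ℝ) ≤ c₂ * (n : ℝ) ^ (α + 1)) ∧
        (c₁ * (n : ℝ) ^ α ≤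
            (((Finset.Ico (Nat.ceil (Mseq β n)) (Nat.ceil (Mseq β (n + 1)))).filter
              (fun k => 16 ≤ k ∧ ε k ω = 1)).card : ℝ) ∧
          (((Finset.Ico (Nat.ceil (Mseq β n)) (Nat.ceil (Mseq β (n + 1)))).filter
              (fun k => 16 ≤ k ∧ ε k ω = 1)).card : ℝ) ≤ c₂ * (n : ℝ) ^ α) :=
  random_set_block_growth_general α β c hα hβ hc ε hmeas hindep hval hmean
end

section
/- There is a numerical constant C > 0 with the following property. Let (ε_k)_{k ≥ 1} be independent {0,1}-valued random variables with E[ε_k] = δ_k ∈ [0,1], let Λ(ω) = {k ≥ 1 : ε_k(ω) = 1}, and set σ_j = δ_1 + ⋯ + δ_j. For integers n ≥ 2 and M ≥ 1, let Ω_n(M) be the event that Λ(ω) ∩ [M, ∞) contains at least one relation of length n. Then P[Ω_n(M)] ≤ (Cⁿ / nⁿ) Σ_{j > M} δ_j² σ_j^{n−2}. -/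
/-!
Union bound over relations. Let `e, j` be the two largest elements of a relation `θ` of length
`n`, labelled so that `δ e ≤ δ j`. The element `e` is determined by the others and their signs,
since `±e` must cancel their signed sum; so `θ` is determined by `j`, the set `S ⊆ [1, j)` of the
remaining `n - 2` elements, and the set `T ⊆ S ∪ {j}` of positive signs, and its probability
`∏ δ_k` is at most `δ_j² ∏_{k ∈ S} δ_k`. Summing over the at most `2ⁿ` sign patterns and using
`(n-2)! e_{n-2}(δ_1, …, δ_{j-1}) ≤ σ_j^{n-2}` for the elementary symmetric polynomial gives the
bound, since `2ⁿ/(n-2)! ≤ 24ⁿ/nⁿ` by `nⁿ ≤ eⁿ n!`. There are no relations of length `2`.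
-/

open MeasureTheory ProbabilityTheory
open scoped ENNReal

/-- A set `A` of positive integers contains a relation of length `n`: there is a finitely
supported family `(θ_k)` with `θ_k ∈ {-1, 0, +1}`, supported in `A`, with
`∑ θ_k k = 0` and `∑ |θ_k| = n`. -/
def HasRelationOfLength (A : Set ℕ) (n : ℕ) : Prop :=
  ∃ θ : ℕ →₀ ℤ, (∀ k, θ k ≠ 0 → k ∈ A) ∧ (∀ k, θ k = -1 ∨ θ k = 0 ∨ θ k = 1) ∧
    (∑ k ∈ θ.support, θ k * (k : ℤ)) = 0 ∧ (∑ k ∈ θ.support, |θ k|) = (n : ℤ)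

namespace Finset

theorem sum_powersetCard_succ_sum_erase {ι M : Type*} [DecidableEq ι] [AddCommMonoid M]
    (s : Finset ι) (m : ℕ) (g : Finset ι → ι → M) :
    ∑ t ∈ s.powersetCard (m + 1), ∑ i ∈ t, g (t.erase i) i =
      ∑ u ∈ s.powersetCard m, ∑ i ∈ s \ u, g u i := by
  rw [sum_sigma', sum_sigma']
  refine sum_nbij' (fun p => ⟨p.1.erase p.2, p.2⟩) (fun p => ⟨insert p.2 p.1, p.2⟩)
    ?_ ?_ ?_ ?_ fun _ _ => rfl
  · rintro ⟨t, i⟩ h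
    simp only [mem_sigma, mem_powersetCard] at h ⊢
    grind
  · rintro ⟨u, i⟩ h
    simp only [mem_sigma, mem_powersetCard, mem_sdiff] at h ⊢
    grind
  · rintro ⟨t, i⟩ h
    simp only [mem_sigma] at h
    simp [insert_erase h.2]
  · rintro ⟨u, i⟩ h
    simp only [mem_sigma, mem_sdiff] at h
    simp [erase_insert h.2.2]

section OrderedSemiring

variable {ι R : Type*} [CommSemiring R] [PartialOrder R] [IsOrderedRing R] {f : ι → R}
  {s : Finset ι}

theorem succ_mul_sum_powersetCard_prod_le (hf : ∀ i ∈ s, 0 ≤ f i) (m : ℕ) :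
    (m + 1 : R) * ∑ t ∈ s.powersetCard (m + 1), ∏ i ∈ t, f i ≤
      (∑ i ∈ s, f i) * ∑ u ∈ s.powersetCard m, ∏ i ∈ u, f i := by
  classical
  calc (m + 1 : R) * ∑ t ∈ s.powersetCard (m + 1), ∏ i ∈ t, f i
      = ∑ t ∈ s.powersetCard (m + 1), ∑ i ∈ t, f i * ∏ k ∈ t.erase i, f k := by
        rw [mul_sum]
        refine sum_congr rfl fun t ht => ?_
        rw [sum_congr rfl fun i hi => mul_prod_erase t f hi, sum_const,
          (mem_powersetCard.mp ht).2, nsmul_eq_mul]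
        push_cast; ring
    _ = ∑ u ∈ s.powersetCard m, ∑ i ∈ s \ u, f i * ∏ k ∈ u, f k :=
        sum_powersetCard_succ_sum_erase s m fun u i => f i * ∏ k ∈ u, f k
    _ ≤ ∑ u ∈ s.powersetCard m, ∑ i ∈ s, f i * ∏ k ∈ u, f k := by
        refine sum_le_sum fun u hu => sum_le_sum_of_subset_of_nonneg sdiff_subset fun i hi _ => ?_
        exact mul_nonneg (hf i hi) (prod_nonneg fun k hk =>
          hf k ((mem_powersetCard.mp hu).1 hk))
    _ = (∑ i ∈ s, f i) * ∑ u ∈ s.powersetCard m, ∏ i ∈ u, f i := by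
        rw [mul_sum]; simp only [← sum_mul]

theorem factorial_mul_sum_powersetCard_prod_le (hf : ∀ i ∈ s, 0 ≤ f i) (m : ℕ) :
    (m.factorial : R) * ∑ t ∈ s.powersetCard m, ∏ i ∈ t, f i ≤ (∑ i ∈ s, f i) ^ m := by
  induction m with
  | zero => simp
  | succ m ih =>
    have hsum : 0 ≤ ∑ i ∈ s, f i := sum_nonneg hf
    calc ((m + 1).factorial : R) * ∑ t ∈ s.powersetCard (m + 1), ∏ i ∈ t, f i
        = m.factorial * ((m + 1 : R) * ∑ t ∈ s.powersetCard (m + 1), ∏ i ∈ t, f i) := by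
          push_cast [Nat.factorial_succ]; ring
      _ ≤ m.factorial * ((∑ i ∈ s, f i) * ∑ u ∈ s.powersetCard m, ∏ i ∈ u, f i) :=
          mul_le_mul_of_nonneg_left (succ_mul_sum_powersetCard_prod_le hf m) (by positivity)
      _ = (∑ i ∈ s, f i) * (m.factorial * ∑ u ∈ s.powersetCard m, ∏ i ∈ u, f i) := by ring
      _ ≤ (∑ i ∈ s, f i) * (∑ i ∈ s, f i) ^ m := by gcongr
      _ = (∑ i ∈ s, f i) ^ (m + 1) := by ring

theorem prod_insert_insert_le_sq_mul [DecidableEq ι] {e j : ι} {S : Finset ι}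
    (hf : ∀ i, 0 ≤ f i) (hj : j ∉ S) (he : e ∉ insert j S) (hej : f e ≤ f j) :
    ∏ k ∈ insert e (insert j S), f k ≤ f j ^ 2 * ∏ k ∈ S, f k := by
  rw [prod_insert he, prod_insert hj, ← mul_assoc, sq]
  exact mul_le_mul_of_nonneg_right (mul_le_mul_of_nonneg_right hej (hf j))
    (prod_nonneg fun k _ => hf k)

end OrderedSemiring

theorem exists_ne_forall_mem_erase_le {α β : Type*} [LinearOrder α] [LinearOrder β]
    (δ : α → β) {U : Finset α} (hU : 1 < U.card) :
    ∃ e ∈ U, ∃ j ∈ U, e ≠ j ∧ δ e ≤ δ j ∧ ∀ k ∈ U.erase e, k ≤ j := by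
  have hU₀ : U.Nonempty := card_pos.mp (by omega)
  have hU₁ : (U.erase (U.max' hU₀)).Nonempty := by
    rw [← card_pos, card_erase_of_mem (max'_mem U hU₀)]; omega
  set k₁ := U.max' hU₀
  set k₂ := (U.erase k₁).max' hU₁
  have hk₂ : k₂ ∈ U.erase k₁ := max'_mem _ hU₁
  by_cases hδ : δ k₁ ≤ δ k₂
  · exact ⟨k₁, max'_mem U hU₀, k₂, mem_of_mem_erase hk₂, (ne_of_mem_erase hk₂).symm, hδ,
      fun k hk => le_max' _ k hk⟩
  · exact ⟨k₂, mem_of_mem_erase hk₂, k₁, max'_mem U hU₀, ne_of_mem_erase hk₂, (not_le.mp hδ).le,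
      fun k hk => le_max' U k (mem_of_mem_erase hk)⟩

end Finset

open Finset

theorem two_pow_div_factorial_le {n : ℕ} (hn : 2 ≤ n) :
    (2 : ℝ) ^ n / (n - 2).factorial ≤ 24 ^ n / (n : ℝ) ^ n := by
  have hexp : (n : ℝ) ^ n ≤ 3 ^ n * n.factorial := by
    have h := Real.pow_div_factorial_le_exp (n : ℝ) (Nat.cast_nonneg n) n
    rw [div_le_iff₀ (by positivity)] at h
    calc (n : ℝ) ^ n ≤ Real.exp n * n.factorial := h
      _ = Real.exp 1 ^ n * n.factorial := by rw [← Real.exp_nat_mul, mul_one]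
      _ ≤ 3 ^ n * n.factorial := by
          gcongr; exact Real.exp_one_lt_d9.le.trans (by norm_num)
  have hfact : (n.factorial : ℝ) ≤ 4 ^ n * (n - 2).factorial := by
    obtain ⟨m, rfl⟩ := Nat.exists_eq_add_of_le' hn
    have hm : ((m + 2 : ℕ) : ℝ) ≤ 2 ^ (m + 2) := by exact_mod_cast (Nat.lt_two_pow_self).le
    rw [Nat.add_sub_cancel, Nat.factorial_succ, Nat.factorial_succ]
    push_cast at hm ⊢
    calc ((m : ℝ) + 1 + 1) * ((m + 1) * m.factorial) ≤ (m + 2) ^ 2 * m.factorial := by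
          nlinarith [(Nat.factorial_pos m)]
      _ ≤ (2 ^ (m + 2)) ^ 2 * m.factorial := by gcongr
      _ = 4 ^ (m + 2) * m.factorial := by rw [← pow_mul, mul_comm (m + 2), pow_mul]; norm_num
  rw [div_le_div_iff₀ (by positivity) (by positivity)]
  calc (2 : ℝ) ^ n * n ^ n ≤ 2 ^ n * (3 ^ n * n.factorial) := by gcongr
    _ ≤ 2 ^ n * (3 ^ n * (4 ^ n * (n - 2).factorial)) := by gcongr
    _ = 24 ^ n * (n - 2).factorial := by
        rw [show (24 : ℝ) = 2 * (3 * 4) by norm_num, mul_pow, mul_pow]; ring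

theorem HasRelationOfLength.exists_support {A : Set ℕ} {n : ℕ} (h : HasRelationOfLength A n) :
    ∃ θ : ℕ →₀ ℤ, ↑θ.support ⊆ A ∧ θ.support.card = n ∧
      (∀ k ∈ θ.support, θ k = 1 ∨ θ k = -1) ∧ ∑ k ∈ θ.support, θ k * (k : ℤ) = 0 := by
  obtain ⟨θ, hA, hθ, hsum, hlen⟩ := h
  have hsign : ∀ k ∈ θ.support, θ k = 1 ∨ θ k = -1 := fun k hk => by
    have := Finsupp.mem_support_iff.mp hk
    have := hθ k
    omega
  refine ⟨θ, fun k hk => hA k (Finsupp.mem_support_iff.mp hk), ?_, hsign, hsum⟩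
  rw [sum_congr rfl fun k hk => show |θ k| = 1 by rcases hsign k hk with h | h <;> simp [h],
    sum_const, nsmul_one] at hlen
  exact_mod_cast hlen

theorem not_hasRelationOfLength_two (A : Set ℕ) : ¬ HasRelationOfLength A 2 := by
  intro h
  obtain ⟨θ, -, hcard, hsign, hsum⟩ := h.exists_support
  obtain ⟨a, b, hab, hU⟩ := card_eq_two.mp hcard
  have ha := hsign a (by simp [hU])
  have hb := hsign b (by simp [hU])
  rw [hU, sum_pair hab] at hsum
  apply hab
  rcases ha with ha | ha <;> rcases hb with hb | hb <;> rw [ha, hb] at hsum <;> omega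

-- If `insert e V` carries a relation with sign `+` exactly on `T ⊆ V`, this is `e`.
def balancingTerm (V T : Finset ℕ) : ℕ :=
  (∑ k ∈ V, if k ∈ T then (k : ℤ) else -k).natAbs

theorem balancingTerm_erase {θ : ℕ →₀ ℤ} (hsign : ∀ k ∈ θ.support, θ k = 1 ∨ θ k = -1)
    (hsum : ∑ k ∈ θ.support, θ k * (k : ℤ) = 0) {e : ℕ} (he : e ∈ θ.support) :
    balancingTerm (θ.support.erase e) ((θ.support.erase e).filter (θ · = 1)) = e := by
  have hsigned : ∑ k ∈ θ.support.erase e,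
      (if k ∈ (θ.support.erase e).filter (θ · = 1) then (k : ℤ) else -k) = -(θ e * e) := by
    rw [← add_eq_zero_iff_eq_neg, ← hsum, ← sum_erase_add _ _ he]
    congr 1
    refine sum_congr rfl fun k hk => ?_
    rcases hsign k (mem_of_mem_erase hk) with h | h <;> simp [hk, h]
  rw [balancingTerm, hsigned]
  rcases hsign e he with h | h <;> simp [h]

def pivotSupport (j : ℕ) (S T : Finset ℕ) : Finset ℕ :=
  insert (balancingTerm (insert j S) T) (insert j S)

noncomputable def pivotSigns (δ : ℕ → ℝ) (j : ℕ) (S : Finset ℕ) : Finset (Finset ℕ) :=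
  (insert j S).powerset.filter fun T =>
    balancingTerm (insert j S) T ∉ insert j S ∧ δ (balancingTerm (insert j S) T) ≤ δ j

theorem HasRelationOfLength.exists_pivot (δ : ℕ → ℝ) {A : Set ℕ} {n M : ℕ} (hn : 3 ≤ n)
    (hA : ∀ k ∈ A, 1 ≤ k ∧ M ≤ k) (h : HasRelationOfLength A n) :
    ∃ j, M < j ∧ ∃ S ∈ (Ico 1 j).powersetCard (n - 2), ∃ T ∈ pivotSigns δ j S,
      ↑(pivotSupport j S T) ⊆ A := by
  obtain ⟨θ, hθA, hcard, hsign, hsum⟩ := h.exists_support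
  obtain ⟨e, he, j, hj, hej, hδ, hle⟩ := θ.support.exists_ne_forall_mem_erase_le δ (by omega)
  set V := θ.support.erase e
  set S := V.erase j
  have hjV : j ∈ V := mem_erase.mpr ⟨hej.symm, hj⟩
  have hV : insert j S = V := insert_erase hjV
  have hbal : balancingTerm (insert j S) (V.filter (θ · = 1)) = e := by
    rw [hV]; exact balancingTerm_erase hsign hsum he
  have hSj : S ⊆ Ico 1 j := fun k hk => by
    have hkV := mem_of_mem_erase hk
    exact mem_Ico.mpr ⟨(hA k (hθA (mem_of_mem_erase hkV))).1,
      lt_of_le_of_ne (hle k hkV) (ne_of_mem_erase hk)⟩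
  have hScard : S.card = n - 2 := by
    rw [card_erase_of_mem hjV, card_erase_of_mem he, hcard]; omega
  obtain ⟨s, hs⟩ : S.Nonempty := card_pos.mp (by omega)
  have hMs : M ≤ s := (hA s (hθA (mem_of_mem_erase (mem_of_mem_erase hs)))).2
  refine ⟨j, hMs.trans_lt (mem_Ico.mp (hSj hs)).2, S, mem_powersetCard.mpr ⟨hSj, hScard⟩,
    V.filter (θ · = 1), ?_, ?_⟩
  · rw [pivotSigns, mem_filter, mem_powerset, hbal, hV]
    exact ⟨filter_subset _ _, notMem_erase e _, hδ⟩
  · rw [pivotSupport, hbal, hV, insert_erase he]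
    exact hθA

theorem sum_sum_pivotSigns_le (δ : ℕ → ℝ) (hδ : ∀ k, 0 ≤ δ k) {n : ℕ} (hn : 2 ≤ n) (j : ℕ) :
    ∑ S ∈ (Ico 1 j).powersetCard (n - 2), ∑ _T ∈ pivotSigns δ j S, δ j ^ 2 * ∏ k ∈ S, δ k ≤
      24 ^ n / (n : ℝ) ^ n * (δ j ^ 2 * (∑ i ∈ Icc 1 j, δ i) ^ (n - 2)) := by
  have hcard : ∀ S ∈ (Ico 1 j).powersetCard (n - 2), ((pivotSigns δ j S).card : ℝ) ≤ 2 ^ n := by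
    intro S hS
    have hS := mem_powersetCard.mp hS
    calc ((pivotSigns δ j S).card : ℝ) ≤ (insert j S).powerset.card := by
          exact_mod_cast card_filter_le _ _
      _ ≤ 2 ^ n := by
          rw [card_powerset]; push_cast
          exact pow_le_pow_right₀ (by norm_num) ((card_insert_le _ _).trans (by omega))
  have hfact : ((n - 2).factorial : ℝ) * ∑ S ∈ (Ico 1 j).powersetCard (n - 2), ∏ k ∈ S, δ k ≤
      (∑ i ∈ Icc 1 j, δ i) ^ (n - 2) :=
    (factorial_mul_sum_powersetCard_prod_le (fun i _ => hδ i) _).trans <|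
      pow_le_pow_left₀ (sum_nonneg fun i _ => hδ i)
        (sum_le_sum_of_subset_of_nonneg Ico_subset_Icc_self fun i _ _ => hδ i) _
  have hpos : (0 : ℝ) < (n - 2).factorial := by positivity
  calc ∑ S ∈ (Ico 1 j).powersetCard (n - 2), ∑ _T ∈ pivotSigns δ j S, δ j ^ 2 * ∏ k ∈ S, δ k
      ≤ ∑ S ∈ (Ico 1 j).powersetCard (n - 2), 2 ^ n * (δ j ^ 2 * ∏ k ∈ S, δ k) := by
        refine sum_le_sum fun S hS => ?_
        rw [sum_const, nsmul_eq_mul]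
        gcongr
        · exact mul_nonneg (sq_nonneg _) (prod_nonneg fun k _ => hδ k)
        · exact hcard S hS
    _ = 2 ^ n / (n - 2).factorial * (δ j ^ 2 *
          ((n - 2).factorial * ∑ S ∈ (Ico 1 j).powersetCard (n - 2), ∏ k ∈ S, δ k)) := by
        rw [← mul_sum, ← mul_sum]; field_simp
    _ ≤ 24 ^ n / (n : ℝ) ^ n * (δ j ^ 2 * (∑ i ∈ Icc 1 j, δ i) ^ (n - 2)) :=
        mul_le_mul (two_pow_div_factorial_le hn) (mul_le_mul_of_nonneg_left hfact (sq_nonneg _))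
          (mul_nonneg (sq_nonneg _) (mul_nonneg hpos.le
            (sum_nonneg fun S _ => prod_nonneg fun k _ => hδ k))) (by positivity)

section Selectors

variable {Ω : Type*} [MeasurableSpace Ω] {P : Measure Ω} {ε : ℕ → Ω → ℝ}

theorem measure_setOf_hasRelationOfLength_le (δ : ℕ → ℝ) {n M : ℕ} (hn : 3 ≤ n) :
    P {ω | HasRelationOfLength {k : ℕ | 1 ≤ k ∧ ε k ω = 1 ∧ M ≤ k} n} ≤
      ∑' j, {j | M < j}.indicator (fun j => ∑ S ∈ (Ico 1 j).powersetCard (n - 2),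
        ∑ T ∈ pivotSigns δ j S, P (⋂ k ∈ pivotSupport j S T, ε k ⁻¹' {1})) j := by
  calc P {ω | HasRelationOfLength {k : ℕ | 1 ≤ k ∧ ε k ω = 1 ∧ M ≤ k} n}
      ≤ P (⋃ j ∈ {j | M < j}, ⋃ S ∈ (Ico 1 j).powersetCard (n - 2), ⋃ T ∈ pivotSigns δ j S,
          ⋂ k ∈ pivotSupport j S T, ε k ⁻¹' {1}) := by
        refine measure_mono fun ω hω => ?_
        obtain ⟨j, hj, S, hS, T, hT, hA⟩ := hω.exists_pivot δ hn fun k hk => ⟨hk.1, hk.2.2⟩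
        simp only [Set.mem_iUnion, Set.mem_iInter, Set.mem_preimage, Set.mem_singleton_iff]
        exact ⟨j, hj, S, hS, T, hT, fun k hk => (hA hk).2.1⟩
    _ ≤ _ := by
        rw [← _root_.tsum_subtype]
        refine (measure_biUnion_le P (Set.to_countable _) _).trans
          (ENNReal.tsum_le_tsum fun j => ?_)
        exact (measure_biUnion_finset_le _ _).trans
          (sum_le_sum fun S _ => measure_biUnion_finset_le _ _)

variable [IsFiniteMeasure P] {δ : ℕ → ℝ}

theorem measure_preimage_one_eq_ofReal_integral {X : Ω → ℝ} (hX : Measurable X)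
    (h01 : ∀ ω, X ω = 0 ∨ X ω = 1) : P (X ⁻¹' {1}) = ENNReal.ofReal (∫ ω, X ω ∂P) := by
  have hind : X = (X ⁻¹' {1}).indicator 1 := by
    funext ω
    rcases h01 ω with h | h <;> simp [Set.indicator, h]
  rw [hind, integral_indicator_one (hX (measurableSet_singleton 1)), ofReal_measureReal,
    ← hind]

theorem measure_biInter_preimage_one (hε : ∀ k, Measurable (ε k)) (hind : iIndepFun ε P)
    (h01 : ∀ k ω, ε k ω = 0 ∨ ε k ω = 1) (hmean : ∀ k, ∫ ω, ε k ω ∂P = δ k)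
    (hδ : ∀ k, 0 ≤ δ k) (U : Finset ℕ) :
    P (⋂ k ∈ U, ε k ⁻¹' {1}) = ENNReal.ofReal (∏ k ∈ U, δ k) := by
  rw [hind.meas_biInter fun k _ => ⟨{1}, measurableSet_singleton 1, rfl⟩,
    ENNReal.ofReal_prod_of_nonneg fun k _ => hδ k]
  exact prod_congr rfl fun k _ => by
    rw [measure_preimage_one_eq_ofReal_integral (hε k) (h01 k), hmean]

theorem sum_measure_pivotSigns_le (hε : ∀ k, Measurable (ε k)) (hind : iIndepFun ε P)
    (h01 : ∀ k ω, ε k ω = 0 ∨ ε k ω = 1) (hmean : ∀ k, ∫ ω, ε k ω ∂P = δ k)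
    (hδ : ∀ k, 0 ≤ δ k) {n : ℕ} (hn : 2 ≤ n) (j : ℕ) :
    ∑ S ∈ (Ico 1 j).powersetCard (n - 2), ∑ T ∈ pivotSigns δ j S,
        P (⋂ k ∈ pivotSupport j S T, ε k ⁻¹' {1}) ≤
      ENNReal.ofReal (24 ^ n / (n : ℝ) ^ n) *
        ENNReal.ofReal (δ j ^ 2 * (∑ i ∈ Icc 1 j, δ i) ^ (n - 2)) := by
  calc ∑ S ∈ (Ico 1 j).powersetCard (n - 2), ∑ T ∈ pivotSigns δ j S,
        P (⋂ k ∈ pivotSupport j S T, ε k ⁻¹' {1})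
      ≤ ∑ S ∈ (Ico 1 j).powersetCard (n - 2), ∑ _T ∈ pivotSigns δ j S,
          ENNReal.ofReal (δ j ^ 2 * ∏ k ∈ S, δ k) := by
        refine sum_le_sum fun S hS => sum_le_sum fun T hT => ?_
        have hjS : j ∉ S := fun h => by simpa using (mem_powersetCard.mp hS).1 h
        obtain ⟨-, he, hle⟩ := mem_filter.mp hT
        rw [measure_biInter_preimage_one hε hind h01 hmean hδ]
        exact ENNReal.ofReal_le_ofReal (prod_insert_insert_le_sq_mul hδ hjS he hle)
    _ = ENNReal.ofReal (∑ S ∈ (Ico 1 j).powersetCard (n - 2), ∑ _T ∈ pivotSigns δ j S,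
          δ j ^ 2 * ∏ k ∈ S, δ k) := by
        rw [ENNReal.ofReal_sum_of_nonneg fun S _ => sum_nonneg fun _ _ =>
          mul_nonneg (sq_nonneg _) (prod_nonneg fun k _ => hδ k)]
        exact sum_congr rfl fun S _ => (ENNReal.ofReal_sum_of_nonneg fun _ _ =>
          mul_nonneg (sq_nonneg _) (prod_nonneg fun k _ => hδ k)).symm
    _ ≤ ENNReal.ofReal (24 ^ n / (n : ℝ) ^ n * (δ j ^ 2 * (∑ i ∈ Icc 1 j, δ i) ^ (n - 2))) :=
        ENNReal.ofReal_le_ofReal (sum_sum_pivotSigns_le δ hδ hn j)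
    _ = _ := ENNReal.ofReal_mul (by positivity)

end Selectors

/-- **Lemma on the probability of relations (Lemma 4.2 of [LQR]).** There is a numerical
constant `C > 0` such that for any selectors `ε_k` of means `δ_k ∈ [0,1]`, the random set
`Λ(ω) = {k ≥ 1 : ε_k(ω) = 1}`, and `σ_j = δ_1 + ⋯ + δ_j`, the probability that
`Λ(ω) ∩ [M, ∞)` contains a relation of length `n` is at most
`(Cⁿ/nⁿ) ∑_{j > M} δ_j² σ_j^{n-2}` (for `n ≥ 2`, `M ≥ 1`). -/
theorem prob_relation_le :
    ∃ C : ℝ, 0 < C ∧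
      ∀ (Ω : Type) (_ : MeasurableSpace Ω) (P : Measure Ω), IsProbabilityMeasure P →
      ∀ (δ : ℕ → ℝ), (∀ k, 0 ≤ δ k) → (∀ k, δ k ≤ 1) →
      ∀ (ε : ℕ → Ω → ℝ), (∀ k, Measurable (ε k)) →
        iIndepFun ε P →
        (∀ k ω, ε k ω = 0 ∨ ε k ω = 1) →
        (∀ k, ∫ ω, ε k ω ∂P = δ k) →
      ∀ (n M : ℕ), 2 ≤ n → 1 ≤ M →
        P {ω | HasRelationOfLength {k : ℕ | 1 ≤ k ∧ ε k ω = 1 ∧ M ≤ k} n} ≤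
          ENNReal.ofReal (C ^ n / (n : ℝ) ^ n) *
            ∑' j : ℕ, if M < j then
              ENNReal.ofReal (δ j ^ 2 * (∑ i ∈ Finset.Icc 1 j, δ i) ^ (n - 2))
            else 0 := by
  refine ⟨24, by norm_num, ?_⟩
  intro Ω _ P _ δ hδ _ ε hε hind h01 hmean n M hn _
  obtain rfl | hn3 := hn.eq_or_lt
  · simp [not_hasRelationOfLength_two]
  calc P {ω | HasRelationOfLength {k : ℕ | 1 ≤ k ∧ ε k ω = 1 ∧ M ≤ k} n}
      ≤ ∑' j, {j | M < j}.indicator (fun j => ∑ S ∈ (Ico 1 j).powersetCard (n - 2),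
          ∑ T ∈ pivotSigns δ j S, P (⋂ k ∈ pivotSupport j S T, ε k ⁻¹' {1})) j :=
        measure_setOf_hasRelationOfLength_le δ hn3
    _ ≤ ∑' j, {j | M < j}.indicator (fun j => ENNReal.ofReal (24 ^ n / (n : ℝ) ^ n) *
          ENNReal.ofReal (δ j ^ 2 * (∑ i ∈ Icc 1 j, δ i) ^ (n - 2))) j :=
        ENNReal.tsum_le_tsum fun j => Set.indicator_le_indicator
          (sum_measure_pivotSigns_le hε hind h01 hmean hδ hn j)
    _ = _ := by
        rw [← ENNReal.tsum_mul_left]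
        simp only [Set.indicator_apply, Set.mem_ofPred_eq, mul_ite, mul_zero]
end

section
/- Let α > 1, β > α, and M_n = n^{βn}. Let (ε_k)_{k ≥ 16} be independent {0,1}-valued random variables with E[ε_k] = δ_k = c (log k)^α / (k (log log k)^{α+1}), where c > 0 is small enough that δ_k ≤ 1 for all k ≥ 16, and let Λ(ω) = {k ≥ 16 : ε_k(ω) = 1}. Then almost surely, for all sufficiently large n, the set Λ(ω) ∩ [M_n, ∞) contains no relation of length n. -/
open MeasureTheory ProbabilityTheory Real

/-!
A relation of length `n ≥ 2` is determined by its second largest element `m`, the set `T` of its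
`n - 2` smaller elements and its signs: the largest element is then `|∑ ±k|` over `insert m T`.
Independence and the bound `δ_k ≤ c (log k)^α / k`, which decreases beyond `M`, turn the union
bound over these data into `2^(n-1) ∑_{m ≥ M} (c (log m)^α / m)^2 e_{n-2}(δ|[M, m))`, and
`e_{n-2}(δ|[M, m)) ≤ (∑_{[M, m)} δ)^(n-2) / (n-2)! ≤ (c (log m)^(α+1))^(n-2) / (n-2)!`.
Summing over `m` leaves about `2^n c^n (log M)^((α+1) n) / ((n-2)! M)`, which for `M ≈ n^(βn)`
is `n^((α - β + o(1)) n) ≤ 2^(-n)` because `β > α`; Borel–Cantelli concludes.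
-/

open Finset Filter Topology
open scoped ENNReal Nat

lemma one_le_log_log {x : ℝ} (hx : 16 ≤ x) : 1 ≤ log (log x) := by
  have h16 : exp 1 < log 16 := by
    rw [show (16 : ℝ) = 2 ^ 4 by norm_num, Real.log_pow]
    push_cast
    linarith [Real.exp_one_lt_d9, Real.log_two_gt_d9]
  rw [Real.le_log_iff_exp_le (Real.log_pos (by linarith))]
  exact h16.le.trans (Real.log_le_log (by norm_num) hx)

lemma selectorMean_le_of_sixteen_le {c α : ℝ} (hc : 0 ≤ c) (hα : 0 ≤ α) {k : ℕ} (hk : 16 ≤ k) :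
    selectorMean c α k ≤ c * log k ^ α / k := by
  have hk' : (16 : ℝ) ≤ k := by exact_mod_cast hk
  have hloglog := one_le_log_log hk'
  unfold selectorMean
  gcongr
  exact le_mul_of_one_le_right (by linarith) (Real.one_le_rpow hloglog (by linarith))

lemma log_rpow_div_rpow_le {γ p x y : ℝ} (hγ : 0 ≤ γ) (hx : 1 < x) (hγx : γ ≤ p * log x)
    (hxy : x ≤ y) : log y ^ γ / y ^ p ≤ log x ^ γ / x ^ p := by
  have hx0 : 0 < x := by linarith
  have hlx : 0 < log x := Real.log_pos hx
  have hly : log x ≤ log y := Real.log_le_log hx0 hxy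
  have key : (log y / log x) ^ γ ≤ (y / x) ^ p := by
    have hratio : log y / log x ≤ exp ((log y - log x) / log x) := by
      have heq : (log y - log x) / log x + 1 = log y / log x := by field_simp; ring
      exact heq ▸ Real.add_one_le_exp _
    have hexponent : γ * ((log y - log x) / log x) ≤ p * (log y - log x) := by
      rw [← mul_div_assoc, div_le_iff₀ hlx]
      nlinarith [sub_nonneg.2 hly]
    calc (log y / log x) ^ γ ≤ exp ((log y - log x) / log x) ^ γ :=
          Real.rpow_le_rpow (div_nonneg (hlx.le.trans hly) hlx.le) hratio hγ
      _ = exp (γ * ((log y - log x) / log x)) := by rw [← Real.exp_mul, mul_comm]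
      _ ≤ exp (log y - log x) ^ p := by rw [← Real.exp_mul]; exact Real.exp_le_exp.2 (by linarith)
      _ = (y / x) ^ p := by rw [Real.exp_sub, Real.exp_log (by linarith), Real.exp_log hx0]
  have hy0 : 0 < y := by linarith
  have hly0 : 0 < log y := by linarith
  rw [Real.div_rpow hly0.le hlx.le, Real.div_rpow hy0.le hx0.le,
    div_le_div_iff₀ (by positivity) (by positivity)] at key
  rw [div_le_div_iff₀ (by positivity) (by positivity)]
  linarith

lemma inv_le_log_sub_log {k : ℝ} (hk : 1 < k) : k⁻¹ ≤ log k - log (k - 1) := by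
  have h := Real.one_sub_inv_le_log_of_pos (x := k / (k - 1)) (by apply div_pos <;> linarith)
  rw [Real.log_div (by linarith) (by linarith), inv_div, one_sub_div (by linarith)] at h
  simpa using h

lemma sum_Ico_inv_le_log {M m : ℕ} (hM : 2 ≤ M) (hMm : M ≤ m) :
    ∑ k ∈ Ico M m, (k : ℝ)⁻¹ ≤ log m := by
  have hM' : (2 : ℝ) ≤ M := by exact_mod_cast hM
  have hm' : (M : ℝ) ≤ m := by exact_mod_cast hMm
  calc ∑ k ∈ Ico M m, (k : ℝ)⁻¹
      ≤ ∑ k ∈ Ico M m, (log (((k + 1 : ℕ) : ℝ) - 1) - log ((k : ℝ) - 1)) := by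
        refine sum_le_sum fun k hk => ?_
        have : (2 : ℝ) ≤ k := by exact_mod_cast hM.trans (mem_Ico.1 hk).1
        push_cast
        simpa using inv_le_log_sub_log (by linarith : (1 : ℝ) < k)
    _ = log (m - 1) - log (M - 1) := sum_Ico_sub (fun i : ℕ => log ((i : ℝ) - 1)) hMm
    _ ≤ log m := by
        have := Real.log_le_log (by linarith) (by linarith : (m : ℝ) - 1 ≤ m)
        linarith [Real.log_nonneg (by linarith : (1 : ℝ) ≤ M - 1)]

lemma sum_Ico_log_rpow_div_le {α : ℝ} (hα : 0 ≤ α) {M m : ℕ} (hM : 2 ≤ M) (hMm : M ≤ m) :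
    ∑ k ∈ Ico M m, log k ^ α / k ≤ log m ^ (α + 1) := by
  have hm : (2 : ℝ) ≤ m := by exact_mod_cast hM.trans hMm
  have hlm : 0 < log m := Real.log_pos (by linarith)
  calc ∑ k ∈ Ico M m, log k ^ α / k ≤ ∑ k ∈ Ico M m, log m ^ α * (k : ℝ)⁻¹ := by
        refine sum_le_sum fun k hk => ?_
        have hk2 : (2 : ℝ) ≤ k := by exact_mod_cast hM.trans (mem_Ico.1 hk).1
        rw [div_eq_mul_inv]
        gcongr
        exact_mod_cast (mem_Ico.1 hk).2.le
    _ ≤ log m ^ α * log m := by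
        rw [← mul_sum]
        exact mul_le_mul_of_nonneg_left (sum_Ico_inv_le_log hM hMm) (by positivity)
    _ = log m ^ (α + 1) := (Real.rpow_add_one hlm.ne' α).symm

lemma inv_mul_sqrt_le {u : ℝ} (hu : 1 < u) :
    (u * √u)⁻¹ ≤ 2 * ((√(u - 1))⁻¹ - (√u)⁻¹) := by
  have ha2 := Real.sq_sqrt (show 0 ≤ u - 1 by linarith)
  have hb2 := Real.sq_sqrt (show 0 ≤ u by linarith)
  have hab : √(u - 1) ≤ √u := Real.sqrt_le_sqrt (by linarith)
  have ha : 0 < √(u - 1) := Real.sqrt_pos.2 (by linarith)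
  set a := √(u - 1)
  set b := √u
  have hba : (b - a) * (a + b) = 1 := by nlinarith
  have key : a * b * (a + b) ≤ 2 * (b - a) * (u * b) * (a + b) := by
    have : 2 * (b - a) * (u * b) * (a + b) = 2 * b ^ 3 := by
      linear_combination (2 * u * b) * hba - (2 * b) * hb2
    rw [this]
    nlinarith [mul_le_mul hab hab ha.le (ha.le.trans hab)]
  rw [inv_sub_inv ha.ne' (ha.trans_le hab).ne', mul_div_assoc', inv_eq_one_div,
    div_le_div_iff₀ (by positivity) (by positivity), one_mul]
  exact le_of_mul_le_mul_right key (by positivity)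

/-- Since `log u ^ γ / √u` decreases for `u ≥ M`, the terms are dominated by the telescoping
series `(log M ^ γ / √M) · 2 (1 / √(u - 1) - 1 / √u)`. -/
lemma sum_range_log_rpow_div_sq_le {γ M : ℝ} (hγ : 0 ≤ γ) (hM : 2 ≤ M) (hγM : 2 * γ ≤ log M)
    (N : ℕ) : ∑ i ∈ range N, log (M + i) ^ γ / (M + i) ^ 2 ≤ 4 * log M ^ γ / M := by
  set C := log M ^ γ / √M
  have hC : 0 ≤ C := by have := Real.log_nonneg (by linarith : (1 : ℝ) ≤ M); positivity
  have hterm : ∀ i : ℕ, log (M + i) ^ γ / (M + i) ^ 2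
      ≤ C * (2 * ((√(M + i - 1))⁻¹ - (√(M + ↑(i + 1) - 1))⁻¹)) := by
    intro i
    have hu : M ≤ M + i := le_add_of_nonneg_right i.cast_nonneg
    have hmono := log_rpow_div_rpow_le (p := 1 / 2) hγ (by linarith) (by linarith) hu
    rw [← Real.sqrt_eq_rpow, ← Real.sqrt_eq_rpow] at hmono
    have hsq : (M + i) ^ 2 = √(M + i) * ((M + i) * √(M + i)) := by
      rw [← mul_assoc, mul_comm _ (M + i : ℝ), mul_assoc, Real.mul_self_sqrt (by linarith), sq]
    rw [Nat.cast_succ, ← add_assoc, add_sub_cancel_right, hsq, ← div_div, div_eq_mul_inv]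
    exact mul_le_mul hmono (inv_mul_sqrt_le (by linarith)) (by positivity) hC
  have hsqrt : (√(M - 1))⁻¹ ≤ 2 * (√M)⁻¹ := by
    rw [show 2 * (√M)⁻¹ = (√M / 2)⁻¹ by rw [inv_div, div_eq_mul_inv]]
    refine inv_anti₀ (by positivity) ?_
    rw [div_le_iff₀ two_pos, ← Real.sqrt_sq (zero_le_two : (0 : ℝ) ≤ 2),
      ← Real.sqrt_mul' _ (by linarith)]
    exact Real.sqrt_le_sqrt (by nlinarith)
  calc ∑ i ∈ range N, log (M + i) ^ γ / (M + i) ^ 2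
      ≤ ∑ i ∈ range N, C * (2 * ((√(M + i - 1))⁻¹ - (√(M + ↑(i + 1) - 1))⁻¹)) :=
        sum_le_sum fun i _ => hterm i
    _ = C * (2 * ((√(M - 1))⁻¹ - (√(M + N - 1))⁻¹)) := by
        rw [← mul_sum, ← mul_sum, sum_range_sub' (fun i : ℕ => (√(M + i - 1))⁻¹)]
        simp
    _ ≤ C * (2 * (2 * (√M)⁻¹)) := by
        gcongr
        linarith [inv_nonneg.2 (Real.sqrt_nonneg (M + N - 1))]
    _ = 4 * log M ^ γ / M := by
        have : 0 < √M := Real.sqrt_pos.2 (by linarith)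
        simp only [C]
        field_simp
        rw [Real.sq_sqrt (by linarith)]
        ring

lemma tsum_ofReal_log_rpow_div_sq_le {γ : ℝ} (hγ : 0 ≤ γ) {M : ℕ} (hM : 2 ≤ M)
    (hγM : 2 * γ ≤ log M) :
    ∑' i : ℕ, ENNReal.ofReal (log ((M + i : ℕ) : ℝ) ^ γ / ((M + i : ℕ) : ℝ) ^ 2)
      ≤ ENNReal.ofReal (4 * log M ^ γ / M) := by
  refine ENNReal.tsum_le_of_sum_range_le fun N => ?_
  have hM' : (2 : ℝ) ≤ M := by exact_mod_cast hM
  rw [← ENNReal.ofReal_sum_of_nonneg fun i _ => by positivity]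
  push_cast
  exact ENNReal.ofReal_le_ofReal (sum_range_log_rpow_div_sq_le hγ hM' hγM N)

lemma pow_succ_add_mul_pow_le_add_pow {R : Type*} [CommSemiring R] [PartialOrder R]
    [IsOrderedRing R] [CanonicallyOrderedAdd R] (x y : R) (j : ℕ) :
    y ^ (j + 1) + (j + 1) * x * y ^ j ≤ (x + y) ^ (j + 1) := by
  rw [add_pow]
  calc y ^ (j + 1) + (j + 1) * x * y ^ j
      = ∑ i ∈ {0, 1}, x ^ i * y ^ (j + 1 - i) * ((j + 1).choose i : R) := by
        rw [sum_pair zero_ne_one]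
        simp only [pow_zero, tsub_zero, one_mul, Nat.choose_zero_right, Nat.cast_one, mul_one,
          pow_one, add_tsub_cancel_right, Nat.choose_one_right, Nat.cast_add]
        ring
    _ ≤ _ := sum_le_sum_of_subset fun i => by
        simp only [mem_insert, mem_singleton, mem_range, Order.lt_add_one_iff]
        omega

lemma factorial_mul_sum_powersetCard_prod_le {ι R : Type*} [DecidableEq ι] [CommSemiring R]
    [PartialOrder R] [IsOrderedRing R] [CanonicallyOrderedAdd R] (f : ι → R) (s : Finset ι)
    (j : ℕ) : (j ! : R) * ∑ T ∈ s.powersetCard j, ∏ k ∈ T, f k ≤ (∑ k ∈ s, f k) ^ j := by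
  induction s using Finset.induction_on generalizing j with
  | empty =>
    cases j with
    | zero => simp
    | succ j => simp [powersetCard_eq_empty.2 (by simp : (∅ : Finset ι).card < j + 1)]
  | insert a s ha ih =>
    cases j with
    | zero => simp
    | succ j =>
      have hmem {T} (hT : T ∈ s.powersetCard j) : a ∉ T := fun h => ha ((mem_powersetCard.1 hT).1 h)
      rw [powersetCard_succ_insert ha, sum_union, sum_image, sum_insert ha]
      · calc ((j + 1)! : R) * (∑ T ∈ s.powersetCard (j + 1), ∏ k ∈ T, f k
              + ∑ T ∈ s.powersetCard j, ∏ k ∈ insert a T, f k)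
            = ((j + 1)! : R) * ∑ T ∈ s.powersetCard (j + 1), ∏ k ∈ T, f k
              + (j + 1) * f a * ((j ! : R) * ∑ T ∈ s.powersetCard j, ∏ k ∈ T, f k) := by
              rw [mul_add, Nat.factorial_succ, mul_sum, mul_sum, mul_sum, mul_sum]
              congr 1
              refine sum_congr rfl fun T hT => ?_
              rw [prod_insert (hmem hT)]
              push_cast
              ring
          _ ≤ (∑ k ∈ s, f k) ^ (j + 1) + (j + 1) * f a * (∑ k ∈ s, f k) ^ j :=
              add_le_add (ih _) (mul_le_mul_right (ih _) _)
          _ ≤ (f a + ∑ k ∈ s, f k) ^ (j + 1) := pow_succ_add_mul_pow_le_add_pow _ _ j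
      · intro T hT U hU hTU
        rw [← erase_insert (hmem hT), hTU, erase_insert (hmem hU)]
      · refine disjoint_left.2 fun T hT hT' => ?_
        obtain ⟨U, -, rfl⟩ := mem_image.1 hT'
        exact ha ((mem_powersetCard.1 hT).1 (mem_insert_self a U))

def signedSum (S P : Finset ℕ) : ℤ := ∑ k ∈ S, if k ∈ P then (k : ℤ) else -k

lemma HasRelationOfLength.mono {A B : Set ℕ} {n : ℕ} (h : HasRelationOfLength A n)
    (hAB : A ⊆ B) : HasRelationOfLength B n := by
  obtain ⟨θ, hA, hθ⟩ := h
  exact ⟨θ, fun k hk => hAB (hA k hk), hθ⟩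

lemma HasRelationOfLength.exists_signedSum_eq_zero {A : Set ℕ} {n : ℕ}
    (h : HasRelationOfLength A n) :
    ∃ S P : Finset ℕ, ↑S ⊆ A ∧ #S = n ∧ P ⊆ S ∧ signedSum S P = 0 := by
  classical
  obtain ⟨θ, hA, hθ, hsum, hlen⟩ := h
  have hsign : ∀ k ∈ θ.support, θ k = -1 ∨ θ k = 1 := fun k hk =>
    (hθ k).imp_right (Or.resolve_left · (Finsupp.mem_support_iff.1 hk))
  refine ⟨θ.support, θ.support.filter (θ · = 1), fun k hk => hA k (Finsupp.mem_support_iff.1 hk),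
    ?_, filter_subset _ _, ?_⟩
  · have : ∑ k ∈ θ.support, |θ k| = ∑ k ∈ θ.support, 1 :=
      sum_congr rfl fun k hk => by rcases hsign k hk with h | h <;> simp [h]
    rw [this, sum_const, nsmul_one] at hlen
    exact_mod_cast hlen
  · rw [← hsum, signedSum]
    refine sum_congr rfl fun k hk => ?_
    rcases hsign k hk with h | h <;> simp [h, hk]

lemma natAbs_signedSum_erase {S P : Finset ℕ} {t : ℕ} (h : signedSum S P = 0) (ht : t ∈ S) :
    (signedSum (S.erase t) (P.erase t)).natAbs = t := by
  have herase : signedSum (S.erase t) (P.erase t) = signedSum (S.erase t) P :=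
    sum_congr rfl fun k hk => by simp [ne_of_mem_erase hk]
  rw [signedSum, ← add_sum_erase _ _ ht] at h
  rw [herase, signedSum, eq_neg_of_add_eq_zero_right h]
  split_ifs <;> simp

lemma HasRelationOfLength.exists_decomposition {A : Set ℕ} {n : ℕ}
    (h : HasRelationOfLength A n) (hn : 2 ≤ n) :
    ∃ m T P, #T = n - 2 ∧ (∀ k ∈ T, k < m) ∧ P ⊆ insert m T ∧
      m < (signedSum (insert m T) P).natAbs ∧
      ↑(insert (signedSum (insert m T) P).natAbs (insert m T)) ⊆ A := by
  obtain ⟨S, P, hSA, hS, hPS, hsum⟩ := h.exists_signedSum_eq_zero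
  have hSne : S.Nonempty := card_pos.1 (by omega)
  set t := S.max' hSne
  have ht : t ∈ S := S.max'_mem hSne
  have hS₁ne : (S.erase t).Nonempty := card_pos.1 (by rw [card_erase_of_mem ht]; omega)
  set m := (S.erase t).max' hS₁ne
  have hm : m ∈ S.erase t := max'_mem _ _
  have hinsert : insert m ((S.erase t).erase m) = S.erase t := insert_erase hm
  have htop : (signedSum (insert m ((S.erase t).erase m)) (P.erase t)).natAbs = t := by
    rw [hinsert, natAbs_signedSum_erase hsum ht]
  refine ⟨m, (S.erase t).erase m, P.erase t, ?_, fun k hk => ?_, ?_, ?_, ?_⟩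
  · rw [card_erase_of_mem hm, card_erase_of_mem ht, hS]
    omega
  · exact lt_of_le_of_ne (le_max' _ _ (mem_of_mem_erase hk)) (ne_of_mem_erase hk)
  · rw [hinsert]
    exact erase_subset_erase t hPS
  · rw [htop]
    exact lt_of_le_of_ne (le_max' _ _ (mem_of_mem_erase hm)) (ne_of_mem_erase hm)
  · rwa [htop, hinsert, insert_erase ht]

section UnionBound

variable {Ω : Type*} {E : ℕ → Set Ω} {M n : ℕ}

lemma setOf_hasRelationOfLength_subset (hn : 2 ≤ n) :
    {ω | HasRelationOfLength {k | M ≤ k ∧ ω ∈ E k} n} ⊆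
      ⋃ i : ℕ, ⋃ T ∈ (Ico M (M + i)).powersetCard (n - 2), ⋃ P ∈ (insert (M + i) T).powerset,
        {ω | M + i < (signedSum (insert (M + i) T) P).natAbs ∧
          ∀ k ∈ insert (signedSum (insert (M + i) T) P).natAbs (insert (M + i) T), ω ∈ E k} := by
  intro ω hω
  obtain ⟨m, T, P, hT, hTm, hP, hmt, hA⟩ := HasRelationOfLength.exists_decomposition hω hn
  have hMm : M ≤ m := (hA (by simp)).1
  simp only [Set.mem_iUnion]
  refine ⟨m - M, ?_⟩
  rw [Nat.add_sub_cancel' hMm]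
  refine ⟨T, mem_powersetCard.2 ⟨fun k hk => mem_Ico.2 ⟨(hA (by simp [hk])).1, hTm k hk⟩, hT⟩,
    P, mem_powerset.2 hP, hmt, fun k hk => (hA hk).2⟩

variable [MeasurableSpace Ω] (μ : Measure Ω) {q : ℕ → ℝ≥0∞}

lemma measure_setOf_lt_natAbs_signedSum_le (hq : AntitoneOn q (Set.Ici M))
    (hE : ∀ S : Finset ℕ, (∀ k ∈ S, M ≤ k) → μ (⋂ k ∈ S, E k) ≤ ∏ k ∈ S, q k)
    {m : ℕ} (hm : M ≤ m) {T : Finset ℕ} (hT : T ⊆ Ico M m) (P : Finset ℕ) :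
    μ {ω | m < (signedSum (insert m T) P).natAbs ∧
      ∀ k ∈ insert (signedSum (insert m T) P).natAbs (insert m T), ω ∈ E k}
      ≤ q m ^ 2 * ∏ k ∈ T, q k := by
  set t := (signedSum (insert m T) P).natAbs
  by_cases hmt : m < t
  · have hTm : ∀ k ∈ T, M ≤ k ∧ k < m := fun k hk => mem_Ico.1 (hT hk)
    have hmT : m ∉ T := fun h => (hTm m h).2.false
    have htT : t ∉ insert m T := by
      simp only [mem_insert, not_or]
      exact ⟨hmt.ne', fun h => ((hTm t h).2.trans hmt).false⟩
    calc μ {ω | m < t ∧ ∀ k ∈ insert t (insert m T), ω ∈ E k}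
        ≤ μ (⋂ k ∈ insert t (insert m T), E k) :=
          measure_mono fun ω hω => Set.mem_iInter₂.2 hω.2
      _ ≤ ∏ k ∈ insert t (insert m T), q k := hE _ fun k hk => by
          simp only [mem_insert] at hk
          rcases hk with rfl | rfl | hk
          exacts [hm.trans hmt.le, hm, (hTm k hk).1]
      _ = q t * (q m * ∏ k ∈ T, q k) := by rw [prod_insert htT, prod_insert hmT]
      _ ≤ q m * (q m * ∏ k ∈ T, q k) := by
          gcongr
          exact hq hm (hm.trans hmt.le) hmt.le
      _ = q m ^ 2 * ∏ k ∈ T, q k := by ring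
  · simp [hmt]

/-- Union bound for a relation of length `n` in `[M, ∞)` when each `k ≥ M` is selected with
probability at most `q k`, `q` decreasing: `M + i` is its second largest element and `T` the set
of its smaller ones. -/
noncomputable def relationSeries (q : ℕ → ℝ≥0∞) (M n : ℕ) : ℝ≥0∞ :=
  2 ^ (n - 1) * ∑' i : ℕ,
    q (M + i) ^ 2 * ∑ T ∈ (Ico M (M + i)).powersetCard (n - 2), ∏ k ∈ T, q k

theorem measure_setOf_hasRelationOfLength_le_s15 (hq : AntitoneOn q (Set.Ici M))
    (hE : ∀ S : Finset ℕ, (∀ k ∈ S, M ≤ k) → μ (⋂ k ∈ S, E k) ≤ ∏ k ∈ S, q k) (hn : 2 ≤ n) :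
    μ {ω | HasRelationOfLength {k | M ≤ k ∧ ω ∈ E k} n} ≤ relationSeries q M n := by
  calc μ {ω | HasRelationOfLength {k | M ≤ k ∧ ω ∈ E k} n}
      ≤ ∑' i : ℕ, ∑ T ∈ (Ico M (M + i)).powersetCard (n - 2), ∑ P ∈ (insert (M + i) T).powerset,
          μ {ω | M + i < (signedSum (insert (M + i) T) P).natAbs ∧
            ∀ k ∈ insert (signedSum (insert (M + i) T) P).natAbs (insert (M + i) T), ω ∈ E k} :=
        (measure_mono (setOf_hasRelationOfLength_subset hn)).trans <|
          (measure_iUnion_le _).trans <| ENNReal.tsum_le_tsum fun i =>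
            (measure_biUnion_finset_le _ _).trans <| sum_le_sum fun T _ =>
              measure_biUnion_finset_le _ _
    _ ≤ ∑' i : ℕ, ∑ T ∈ (Ico M (M + i)).powersetCard (n - 2), ∑ P ∈ (insert (M + i) T).powerset,
          q (M + i) ^ 2 * ∏ k ∈ T, q k := by
        refine ENNReal.tsum_le_tsum fun i => sum_le_sum fun T hT => sum_le_sum fun P _ => ?_
        exact measure_setOf_lt_natAbs_signedSum_le μ hq hE (Nat.le_add_right M i)
          (mem_powersetCard.1 hT).1 P
    _ = relationSeries q M n := by
        rw [relationSeries, ← ENNReal.tsum_mul_left]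
        refine tsum_congr fun i => ?_
        rw [mul_sum, mul_sum]
        refine sum_congr rfl fun T hT => ?_
        obtain ⟨hTsub, hTcard⟩ := mem_powersetCard.1 hT
        have hmT : M + i ∉ T := fun h => (mem_Ico.1 (hTsub h)).2.false
        rw [sum_const, card_powerset, card_insert_of_notMem hmT, hTcard, nsmul_eq_mul,
          show n - 2 + 1 = n - 1 by omega]
        push_cast
        ring

end UnionBound

lemma antitoneOn_ofReal_log_rpow_div {c α : ℝ} (hc : 0 ≤ c) (hα : 0 ≤ α) {M : ℕ} (hM : 2 ≤ M)
    (hαM : α ≤ log M) :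
    AntitoneOn (fun k : ℕ => ENNReal.ofReal (c * log k ^ α / k)) (Set.Ici M) := by
  intro x hx y _ hxy
  have hx' : (2 : ℝ) ≤ x := by exact_mod_cast hM.trans hx
  have hlog : log M ≤ log x := Real.log_le_log (by positivity) (by exact_mod_cast hx)
  refine ENNReal.ofReal_le_ofReal ?_
  simp only [mul_div_assoc]
  refine mul_le_mul_of_nonneg_left ?_ hc
  simpa only [Real.rpow_one] using
    log_rpow_div_rpow_le (p := 1) hα (by linarith) (by linarith) (by exact_mod_cast hxy)

lemma sum_Ico_ofReal_le {c α : ℝ} (hc : 0 ≤ c) (hα : 0 ≤ α) {M m : ℕ} (hM : 2 ≤ M)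
    (hMm : M ≤ m) :
    ∑ k ∈ Ico M m, ENNReal.ofReal (c * log k ^ α / k) ≤ ENNReal.ofReal (c * log m ^ (α + 1)) := by
  rw [← ENNReal.ofReal_sum_of_nonneg fun k hk => ?_]
  · simp only [mul_div_assoc, ← mul_sum]
    exact ENNReal.ofReal_le_ofReal
      (mul_le_mul_of_nonneg_left (sum_Ico_log_rpow_div_le hα hM hMm) hc)
  · have : (1 : ℝ) ≤ k := by exact_mod_cast (by omega : 1 ≤ M).trans (mem_Ico.1 hk).1
    have := Real.log_nonneg this
    positivity

lemma ofReal_sq_mul_sum_powersetCard_le {c α : ℝ} (hc : 0 ≤ c) (hα : 0 ≤ α) {M m : ℕ}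
    (hM : 3 ≤ M) (hMm : M ≤ m) (j : ℕ) :
    ENNReal.ofReal (c * log m ^ α / m) ^ 2 *
        ∑ T ∈ (Ico M m).powersetCard j, ∏ k ∈ T, ENNReal.ofReal (c * log k ^ α / k)
      ≤ ENNReal.ofReal ((c * log m ^ (α + 1)) ^ (j + 2) / (j ! * m ^ 2)) := by
  have hm : (3 : ℝ) ≤ m := by exact_mod_cast hM.trans hMm
  have hlog : 1 ≤ log m := by
    rw [Real.le_log_iff_exp_le (by positivity)]
    linarith [Real.exp_one_lt_d9]
  have hℓ : 0 ≤ c * log m ^ (α + 1) := by positivity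
  have hfac : (0 : ℝ) < j ! := by exact_mod_cast j.factorial_pos
  have hesymm : ∑ T ∈ (Ico M m).powersetCard j, ∏ k ∈ T, ENNReal.ofReal (c * log k ^ α / k)
      ≤ ENNReal.ofReal (c * log m ^ (α + 1)) ^ j / (j ! : ℝ≥0∞) := by
    rw [ENNReal.le_div_iff_mul_le (by simp [j.factorial_ne_zero]) (by simp), mul_comm]
    exact (factorial_mul_sum_powersetCard_prod_le _ _ j).trans
      (pow_le_pow_left₀ (by positivity) (sum_Ico_ofReal_le hc hα (by omega) hMm) j)
  have hsq : c * log m ^ α / m ≤ c * log m ^ (α + 1) / m := by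
    gcongr
    linarith
  calc ENNReal.ofReal (c * log m ^ α / m) ^ 2 *
        ∑ T ∈ (Ico M m).powersetCard j, ∏ k ∈ T, ENNReal.ofReal (c * log k ^ α / k)
      ≤ ENNReal.ofReal (c * log m ^ (α + 1) / m) ^ 2 *
          (ENNReal.ofReal (c * log m ^ (α + 1)) ^ j / (j ! : ℝ≥0∞)) := by
        gcongr
    _ = ENNReal.ofReal ((c * log m ^ (α + 1)) ^ (j + 2) / (j ! * m ^ 2)) := by
        rw [← ENNReal.ofReal_pow (by positivity), ← ENNReal.ofReal_pow hℓ,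
          ← ENNReal.ofReal_natCast, ← ENNReal.ofReal_div_of_pos hfac,
          ← ENNReal.ofReal_mul (by positivity)]
        congr 1
        field_simp
        ring

theorem relationSeries_ofReal_log_rpow_div_le {c α : ℝ} (hc : 0 ≤ c) (hα : 0 ≤ α) {M n : ℕ}
    (hM : 3 ≤ M) (hn : 2 ≤ n) (hMn : 2 * ((α + 1) * n) ≤ log M) :
    relationSeries (fun k => ENNReal.ofReal (c * log k ^ α / k)) M n
      ≤ ENNReal.ofReal (2 ^ (n + 1) * c ^ n * log M ^ ((α + 1) * n) / ((n - 2)! * M)) := by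
  have hterm : ∀ i : ℕ,
      ENNReal.ofReal (c * log ((M + i : ℕ) : ℝ) ^ α / ((M + i : ℕ) : ℝ)) ^ 2 *
        ∑ T ∈ (Ico M (M + i)).powersetCard (n - 2), ∏ k ∈ T, ENNReal.ofReal (c * log k ^ α / k)
      ≤ ENNReal.ofReal (c ^ n / (n - 2)!) *
          ENNReal.ofReal (log ((M + i : ℕ) : ℝ) ^ ((α + 1) * n) / ((M + i : ℕ) : ℝ) ^ 2) := by
    intro i
    have hm : (3 : ℝ) ≤ (M + i : ℕ) := by exact_mod_cast hM.trans (Nat.le_add_right M i)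
    have hlog : 0 ≤ log ((M + i : ℕ) : ℝ) := Real.log_nonneg (by linarith)
    refine (ofReal_sq_mul_sum_powersetCard_le hc hα hM (Nat.le_add_right M i) (n - 2)).trans_eq ?_
    rw [← ENNReal.ofReal_mul (by positivity), Nat.sub_add_cancel hn, mul_pow,
      Real.rpow_mul_natCast hlog]
    congr 1
    field_simp
  have htail := tsum_ofReal_log_rpow_div_sq_le (γ := (α + 1) * n) (by positivity) (by omega) hMn
  calc relationSeries (fun k => ENNReal.ofReal (c * log k ^ α / k)) M n
      ≤ 2 ^ (n - 1) * ∑' i : ℕ, ENNReal.ofReal (c ^ n / (n - 2)!) *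
          ENNReal.ofReal (log ((M + i : ℕ) : ℝ) ^ ((α + 1) * n) / ((M + i : ℕ) : ℝ) ^ 2) :=
        mul_le_mul_right (ENNReal.tsum_le_tsum hterm) _
    _ ≤ 2 ^ (n - 1) * (ENNReal.ofReal (c ^ n / (n - 2)!) *
          ENNReal.ofReal (4 * log M ^ ((α + 1) * n) / M)) := by
        rw [ENNReal.tsum_mul_left]
        gcongr
    _ = ENNReal.ofReal (2 ^ (n + 1) * c ^ n * log M ^ ((α + 1) * n) / ((n - 2)! * M)) := by
        rw [← ENNReal.ofReal_mul (by positivity), ← ENNReal.ofReal_ofNat 2,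
          ← ENNReal.ofReal_pow zero_le_two, ← ENNReal.ofReal_mul (by positivity)]
        congr 1
        obtain ⟨k, rfl⟩ := Nat.exists_eq_add_of_le' hn
        rw [show k + 2 - 1 = k + 1 by omega]
        field_simp
        ring

lemma tendsto_mul_log_rpow_div_mul_rpow {α β : ℝ} (hαβ : α < β) :
    Tendsto (fun x : ℝ => (x * log x) ^ (α + 1) / (x * x ^ β)) atTop (𝓝 0) := by
  refine ((isLittleO_log_rpow_rpow_atTop (α + 1) (sub_pos.2 hαβ)).tendsto_div_nhds_zero).congr'
    ?_
  filter_upwards [eventually_ge_atTop 1] with x hx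
  have hx0 : 0 < x := by linarith
  have h : x * x ^ β = x ^ (α + 1) * x ^ (β - α) := by
    rw [← Real.rpow_add hx0, show α + 1 + (β - α) = 1 + β by ring, Real.rpow_add hx0,
      Real.rpow_one]
  rw [Real.mul_rpow hx0.le (Real.log_nonneg hx), h,
    mul_div_mul_left _ _ (Real.rpow_pos_of_pos hx0 _).ne']

lemma pow_le_sq_mul_exp_mul_factorial {n : ℕ} (hn : 2 ≤ n) :
    (n : ℝ) ^ n ≤ n ^ 2 * exp n * (n - 2)! := by
  have hexp := Real.pow_div_factorial_le_exp (n : ℝ) n.cast_nonneg n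
  rw [div_le_iff₀ (by exact_mod_cast n.factorial_pos)] at hexp
  obtain ⟨k, rfl⟩ := Nat.exists_eq_add_of_le' hn
  have hfac : ((k + 2)! : ℝ) ≤ ((k + 2 : ℕ) : ℝ) ^ 2 * k ! := by
    rw [Nat.factorial_succ, Nat.factorial_succ]
    push_cast
    have : (0 : ℝ) ≤ k ! := by positivity
    nlinarith
  rw [Nat.add_sub_cancel]
  calc ((k + 2 : ℕ) : ℝ) ^ (k + 2) ≤ exp (k + 2 : ℕ) * (k + 2)! := hexp
    _ ≤ exp (k + 2 : ℕ) * (((k + 2 : ℕ) : ℝ) ^ 2 * k !) := by gcongr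
    _ = _ := by ring

lemma two_pow_mul_log_rpow_div_factorial_le {α β c M : ℝ} (hc : 0 ≤ c) {n : ℕ} (hn : 2 ≤ n)
    (hM : ((n : ℝ) ^ β) ^ n ≤ M) (hL : 0 ≤ log M) :
    2 ^ (n + 1) * c ^ n * log M ^ ((α + 1) * n) / ((n - 2)! * M)
      ≤ 2 * n ^ 2 * (2 * exp 1 * c * log M ^ (α + 1) / (n * n ^ β)) ^ n := by
  have hnβ : 0 < ((n : ℝ) ^ β) ^ n := by positivity
  have hfac : (0 : ℝ) < (n - 2)! := by exact_mod_cast (n - 2).factorial_pos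
  have hM0 : 0 < M := hnβ.trans_le hM
  have hkey := pow_le_sq_mul_exp_mul_factorial hn
  rw [Real.rpow_mul_natCast hL, div_pow, mul_pow, mul_pow, mul_pow, mul_pow, Real.exp_one_pow,
    div_le_iff₀ (mul_pos hfac hM0)]
  calc 2 ^ (n + 1) * c ^ n * (log M ^ (α + 1)) ^ n
      = 2 * 2 ^ n * c ^ n * (log M ^ (α + 1)) ^ n * 1 := by ring
    _ ≤ 2 * 2 ^ n * c ^ n * (log M ^ (α + 1)) ^ n
          * (n ^ 2 * exp n * (n - 2)! * M / ((n : ℝ) ^ n * ((n : ℝ) ^ β) ^ n)) := by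
        gcongr
        rw [one_le_div (by positivity)]
        exact mul_le_mul hkey hM hnβ.le (by positivity)
    _ = _ := by field_simp

lemma ceil_Mseq_bounds {β : ℝ} (hβ : 0 ≤ β) {n : ℕ} (hn : 1 ≤ n) :
    ((n : ℝ) ^ β) ^ n ≤ ⌈Mseq β n⌉₊ ∧ β * n * log n ≤ log ⌈Mseq β n⌉₊ ∧
      log ⌈Mseq β n⌉₊ ≤ log 2 + β * n * log n := by
  have hn' : (1 : ℝ) ≤ n := by exact_mod_cast hn
  have hpow : 1 ≤ ((n : ℝ) ^ β) ^ n := one_le_pow₀ (Real.one_le_rpow hn' hβ)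
  have hMseq : Mseq β n = ((n : ℝ) ^ β) ^ n := Real.rpow_mul_natCast n.cast_nonneg β n
  have hlow : ((n : ℝ) ^ β) ^ n ≤ ⌈Mseq β n⌉₊ := hMseq ▸ Nat.le_ceil _
  have hup : (⌈Mseq β n⌉₊ : ℝ) ≤ 2 * ((n : ℝ) ^ β) ^ n := by
    have : (⌈Mseq β n⌉₊ : ℝ) < Mseq β n + 1 := Nat.ceil_lt_add_one (by linarith)
    linarith
  have hlogpow : log (((n : ℝ) ^ β) ^ n) = β * n * log n := by
    rw [Real.log_pow, Real.log_rpow (by linarith)]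
    ring
  refine ⟨hlow, hlogpow ▸ Real.log_le_log (by linarith) hlow, ?_⟩
  rw [← hlogpow, ← Real.log_mul two_ne_zero (by linarith)]
  exact Real.log_le_log (by linarith) hup

lemma two_mul_sq_mul_inv_sixteen_pow_le {n : ℕ} (hn : 1 ≤ n) :
    2 * (n : ℝ) ^ 2 * (1 / 16) ^ n ≤ (1 / 2) ^ n := by
  have hsq : (n : ℝ) ^ 2 ≤ 4 ^ n := by
    rw [show (4 : ℝ) ^ n = ((2 : ℝ) ^ n) ^ 2 by rw [← pow_mul, mul_comm, pow_mul]; norm_num]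
    gcongr
    exact_mod_cast n.lt_two_pow_self.le
  have htwo : (2 : ℝ) ≤ 2 ^ n := le_self_pow₀ one_le_two (by omega)
  calc 2 * (n : ℝ) ^ 2 * (1 / 16) ^ n ≤ 2 ^ n * 4 ^ n * (1 / 16) ^ n := by gcongr
    _ = (1 / 2) ^ n := by rw [← mul_pow, ← mul_pow]; norm_num

theorem eventually_ceil_Mseq_bounds {α β c : ℝ} (hα : 0 ≤ α) (hβ : α < β) (hc : 0 ≤ c) :
    ∀ᶠ n : ℕ in atTop, 16 ≤ ⌈Mseq β n⌉₊ ∧ α ≤ log ⌈Mseq β n⌉₊ ∧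
      2 * ((α + 1) * n) ≤ log ⌈Mseq β n⌉₊ ∧
      2 ^ (n + 1) * c ^ n * log ⌈Mseq β n⌉₊ ^ ((α + 1) * n) / ((n - 2)! * ⌈Mseq β n⌉₊)
        ≤ (1 / 2) ^ n := by
  have hβ0 : 0 < β := by linarith
  set K := 2 * exp 1 * c * (2 * β) ^ (α + 1)
  have hsmall : ∀ᶠ n : ℕ in atTop, K * (((n : ℝ) * log n) ^ (α + 1) / (n * n ^ β)) < 1 / 16 := by
    have := ((tendsto_mul_log_rpow_div_mul_rpow hβ).const_mul K).comp tendsto_natCast_atTop_atTop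
    rw [mul_zero] at this
    exact this.eventually (gt_mem_nhds (by norm_num))
  have hlog : Tendsto (fun n : ℕ => β * log n) atTop atTop :=
    (Real.tendsto_log_atTop.comp tendsto_natCast_atTop_atTop).const_mul_atTop hβ0
  filter_upwards [eventually_ge_atTop 16, hlog.eventually_ge_atTop (2 * (α + 1)), hsmall]
    with n hn hlarge hsmall
  obtain ⟨hpowM, hlow, hup⟩ := ceil_Mseq_bounds hβ0.le (by omega : 1 ≤ n)
  set M := ⌈Mseq β n⌉₊
  have hn' : (16 : ℝ) ≤ n := by exact_mod_cast hn
  have hM0 : (0 : ℝ) < M := lt_of_lt_of_le (by positivity) hpowM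
  have hMn : 2 * ((α + 1) * n) ≤ log M := by nlinarith
  have h16 : 16 ≤ M := by
    have : log 16 ≤ log M := by
      nlinarith [Real.log_le_sub_one_of_pos (by norm_num : (0 : ℝ) < 16)]
    exact_mod_cast (Real.log_le_log_iff (by norm_num) hM0).1 this
  refine ⟨h16, by nlinarith, hMn, ?_⟩
  calc _ ≤ 2 * n ^ 2 * (2 * exp 1 * c * log M ^ (α + 1) / (n * n ^ β)) ^ n :=
        two_pow_mul_log_rpow_div_factorial_le hc (by omega) hpowM (by positivity)
    _ ≤ 2 * n ^ 2 * (1 / 16) ^ n := by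
        refine mul_le_mul_of_nonneg_left (pow_le_pow_left₀ (by positivity) ?_ n) (by positivity)
        calc 2 * exp 1 * c * log M ^ (α + 1) / (n * n ^ β)
            ≤ 2 * exp 1 * c * (2 * β * n * log n) ^ (α + 1) / (n * n ^ β) := by
              gcongr
              nlinarith [Real.log_two_lt_d9]
          _ = K * (((n : ℝ) * log n) ^ (α + 1) / (n * n ^ β)) := by
              rw [mul_assoc (2 * β), Real.mul_rpow (by positivity) (by positivity)]
              ring
          _ ≤ 1 / 16 := hsmall.le
    _ ≤ (1 / 2) ^ n := two_mul_sq_mul_inv_sixteen_pow_le (by omega)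

lemma measure_preimage_one_eq_ofReal_integral_s15 {Ω : Type*} [MeasurableSpace Ω] {μ : Measure Ω}
    [IsFiniteMeasure μ] {f : Ω → ℝ} (hf : Measurable f) (h01 : ∀ ω, f ω = 0 ∨ f ω = 1) :
    μ (f ⁻¹' {1}) = ENNReal.ofReal (∫ ω, f ω ∂μ) := by
  have hs : MeasurableSet (f ⁻¹' {1}) := hf (measurableSet_singleton 1)
  rw [← ofReal_measureReal, ← integral_indicator_one hs]
  congr 1
  refine integral_congr_ae (ae_of_all _ fun ω => ?_)
  rcases h01 ω with h | h <;> simp [h]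

lemma ProbabilityTheory.iIndepFun.measure_biInter_preimage_eq_prod {ι Ω β : Type*}
    [MeasurableSpace Ω] [MeasurableSpace β] {μ : Measure Ω} {p : ι → Prop} {f : ι → Ω → β}
    (h : iIndepFun (fun i : Subtype p => f i) μ) {S : Finset ι} (hS : ∀ i ∈ S, p i)
    {A : ι → Set β} (hA : ∀ i ∈ S, MeasurableSet (A i)) :
    μ (⋂ i ∈ S, f i ⁻¹' A i) = ∏ i ∈ S, μ (f i ⁻¹' A i) := by
  classical
  have key := h.measure_inter_preimage_eq_mul (S.subtype p) (sets := fun i => A i)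
    fun i hi => hA i (mem_subtype.1 hi)
  rw [prod_subtype_eq_prod_filter (f := fun i => μ (f i ⁻¹' A i)), filter_true_of_mem hS] at key
  rw [← key]
  congr 1
  ext ω
  simp only [Set.mem_iInter, mem_subtype, Subtype.forall]
  exact ⟨fun hω i _ hi => hω i hi, fun hω i hi => hω i (hS i hi) hi⟩

lemma ae_eventually_notMem_of_eventually_le {α : Type*} [MeasurableSpace α] {μ : Measure α}
    {s : ℕ → Set α} {r : ℕ → ℝ≥0∞} (hr : ∑' n, r n ≠ ∞)
    (h : ∀ᶠ n in atTop, μ (s n) ≤ r n) : ∀ᵐ x ∂μ, ∀ᶠ n in atTop, x ∉ s n := by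
  obtain ⟨N, hN⟩ := eventually_atTop.1 h
  have hshift : ∑' n, μ (s (n + N)) ≠ ∞ :=
    ne_top_of_le_ne_top hr <| (ENNReal.tsum_le_tsum fun n => hN _ (Nat.le_add_left N n)).trans
      (ENNReal.tsum_comp_le_tsum_of_injective (add_left_injective N) r)
  filter_upwards [ae_eventually_notMem hshift] with x hx
  filter_upwards [(tendsto_sub_atTop_nat N).eventually hx, eventually_ge_atTop N] with n hn hNn
  rwa [Nat.sub_add_cancel hNn] at hn

lemma measure_biInter_preimage_one_le {Ω : Type*} [MeasurableSpace Ω] {P : Measure Ω}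
    [IsFiniteMeasure P] {α c : ℝ} (hc : 0 ≤ c) (hα : 0 ≤ α) {ε : ℕ → Ω → ℝ}
    (hmeas : ∀ k, Measurable (ε k)) (hindep : iIndepFun (fun k : {k : ℕ // 16 ≤ k} => ε k) P)
    (hval : ∀ k : ℕ, 16 ≤ k → ∀ ω, ε k ω = 0 ∨ ε k ω = 1)
    (hmean : ∀ k : ℕ, 16 ≤ k → ∫ ω, ε k ω ∂P = selectorMean c α k)
    {S : Finset ℕ} (hS : ∀ k ∈ S, 16 ≤ k) :
    P (⋂ k ∈ S, ε k ⁻¹' {1}) ≤ ∏ k ∈ S, ENNReal.ofReal (c * log k ^ α / k) := by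
  rw [hindep.measure_biInter_preimage_eq_prod hS fun _ _ => measurableSet_singleton 1]
  refine prod_le_prod' fun k hk => ?_
  rw [measure_preimage_one_eq_ofReal_integral_s15 (hmeas k) (hval k (hS k hk)), hmean k (hS k hk)]
  exact ENNReal.ofReal_le_ofReal (selectorMean_le_of_sixteen_le hc hα (hS k hk))

theorem random_set_eventually_no_relation_general
    {Ω : Type} [MeasurableSpace Ω] {P : Measure Ω} [IsProbabilityMeasure P]
    (α β c : ℝ) (hα : 1 < α) (hβ : α < β)
    (hc : 0 < c)
    (ε : ℕ → Ω → ℝ) (hmeas : ∀ k, Measurable (ε k))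
    (hindep : iIndepFun (fun k : {k : ℕ // 16 ≤ k} => ε k) P)
    (hval : ∀ k : ℕ, 16 ≤ k → ∀ ω, ε k ω = 0 ∨ ε k ω = 1)
    (hmean : ∀ k : ℕ, 16 ≤ k → ∫ ω, ε k ω ∂P = selectorMean c α k)
    (Λ : Ω → Set ℕ) (hΛ : ∀ ω, Λ ω = {k : ℕ | 16 ≤ k ∧ ε k ω = 1}) :
    ∀ᵐ ω ∂P, ∃ n₀ : ℕ, ∀ n : ℕ, n₀ ≤ n →
      ¬ HasRelationOfLength (Λ ω ∩ {k : ℕ | Mseq β n ≤ (k : ℝ)}) n := by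
  have hα0 : 0 ≤ α := by linarith
  have hbad : ∀ᶠ n in atTop, P {ω | HasRelationOfLength (Λ ω ∩ {k | Mseq β n ≤ k}) n}
      ≤ ENNReal.ofReal ((1 / 2) ^ n) := by
    filter_upwards [eventually_ge_atTop 2, eventually_ceil_Mseq_bounds hα0 hβ hc.le]
      with n hn ⟨h16, hαM, hlog, hbound⟩
    calc P {ω | HasRelationOfLength (Λ ω ∩ {k | Mseq β n ≤ k}) n}
        ≤ P {ω | HasRelationOfLength {k | ⌈Mseq β n⌉₊ ≤ k ∧ ω ∈ ε k ⁻¹' {1}} n} :=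
          measure_mono fun ω h => h.mono fun k ⟨hk, hkM⟩ =>
            ⟨Nat.ceil_le.2 hkM, (hΛ ω ▸ hk).2⟩
      _ ≤ _ := measure_setOf_hasRelationOfLength_le_s15 P
          (antitoneOn_ofReal_log_rpow_div hc.le hα0 (by omega) hαM)
          (fun S hS => measure_biInter_preimage_one_le hc.le hα0 hmeas hindep hval hmean
            fun k hk => h16.trans (hS k hk)) hn
      _ ≤ _ := relationSeries_ofReal_log_rpow_div_le hc.le hα0 (by omega) hn hlog
      _ ≤ _ := ENNReal.ofReal_le_ofReal hbound
  have hsum : ∑' n : ℕ, ENNReal.ofReal ((1 / 2) ^ n) ≠ ∞ := by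
    rw [← ENNReal.ofReal_tsum_of_nonneg (fun n => by positivity) summable_geometric_two]
    exact ENNReal.ofReal_ne_top
  filter_upwards [ae_eventually_notMem_of_eventually_le hsum hbad] with ω hω
  exact eventually_atTop.1 hω

/-- **Almost surely, no long relations far out.** For `α > 1`, `β > α`, `M_n = n^{βn}`
and the random set `Λ(ω)` of selectors of mean `δ_k = c (log k)^α / (k (log log k)^{α+1})`
(`k ≥ 16`), almost surely, for all sufficiently large `n`, the set `Λ(ω) ∩ [M_n, ∞)`
contains no relation of length `n`. -/
theorem random_set_eventually_no_relation
    {Ω : Type} [MeasurableSpace Ω] {P : Measure Ω} [IsProbabilityMeasure P]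
    (α β c : ℝ) (hα : 1 < α) (hβ : α < β)
    (hc : 0 < c) (hcsmall : ∀ k : ℕ, 16 ≤ k → selectorMean c α k ≤ 1)
    (ε : ℕ → Ω → ℝ) (hmeas : ∀ k, Measurable (ε k))
    (hindep : iIndepFun (fun k : {k : ℕ // 16 ≤ k} => ε k) P)
    (hval : ∀ k : ℕ, 16 ≤ k → ∀ ω, ε k ω = 0 ∨ ε k ω = 1)
    (hmean : ∀ k : ℕ, 16 ≤ k → ∫ ω, ε k ω ∂P = selectorMean c α k)
    (Λ : Ω → Set ℕ) (hΛ : ∀ ω, Λ ω = {k : ℕ | 16 ≤ k ∧ ε k ω = 1}) :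
    ∀ᵐ ω ∂P, ∃ n₀ : ℕ, ∀ n : ℕ, n₀ ≤ n →
      ¬ HasRelationOfLength (Λ ω ∩ {k : ℕ | Mseq β n ≤ (k : ℝ)}) n :=
  random_set_eventually_no_relation_general α β c hα hβ hc ε hmeas hindep hval hmean Λ hΛ
end
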